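/- arXiv:2401.00359 — 5 statements merged into one kernel-verified Lean document; each statement's English description precedes it below -/
import Mathlib

section
/- Let d ≥ 2, k ≥ 3, and let t, h, n, λ be positive integers with 1 ≤ t ≤ k, and let p ∈ (0, 1/2) be a real number. Suppose p^{(λ+1)d}·n ≥ 1 and n^{−1} ≥ (h/n)^{λd} · C(kn, d) · 2^{C(d, k−1)}, where C(a,b) denotes the binomial coefficient. Let G be a k-partite k-uniform hypergraph on vertex set V_1 ⊔ ⋯ ⊔ V_k with n vertices in each part and at least p·n^k edges, and suppose G is (h, (λ+1)d)-vertex-extending to V_r for all r < t. Then there exists a subhypergraph G' of G on the same vertex set with at least p^{(λ+1)d}·n^k edges that is (h, d)-vertex-extending to V_r for all r ≤ t. -/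
open Finset

/-- A `k`-uniform hypergraph on vertex type `V`: a finite set of `k`-element edges. -/
structure HyperGraph (k : ℕ) (V : Type) where
  edges : Finset (Finset V)
  card_eq : ∀ e ∈ edges, e.card = k

/-- A finite set system `E` on `V` has degeneracy at most `d` if every nonempty induced
subsystem has a vertex of degree at most `d`. -/
def degenLE {V : Type} [DecidableEq V] (E : Finset (Finset V)) (d : ℕ) : Prop :=
  ∀ U : Finset V, U.Nonempty → ∃ v ∈ U, (E.filter fun e => v ∈ e ∧ e ⊆ U).card ≤ d

/-- The degeneracy of a finite set system: the least `d` such that every nonempty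
induced subsystem has minimum degree at most `d`. -/
noncomputable def degeneracy {V : Type} [DecidableEq V] (E : Finset (Finset V)) : ℕ :=
  sInf {d | degenLE E d}

namespace HyperGraph

variable {k : ℕ} {V W : Type}

/-- The edge set of the `i`-skeleton of `H`: all `(i+1)`-element subsets of edges of `H`. -/
def skeleton [DecidableEq V] (H : HyperGraph k V) (i : ℕ) : Finset (Finset V) :=
  H.edges.biUnion fun e => e.powersetCard (i + 1)

/-- The `i`-th skeletal degeneracy `d_i(H)`: the degeneracy of the `i`-skeleton of `H`. -/
noncomputable def skelDegen [DecidableEq V] (H : HyperGraph k V) (i : ℕ) : ℕ :=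
  degeneracy (H.skeleton i)

/-- The skeletal degeneracy `d_1(H)`: the degeneracy of the `1`-skeleton of `H`. -/
noncomputable def d1 [DecidableEq V] (H : HyperGraph k V) : ℕ := H.skelDegen 1

/-- `H` is `k`-partite with parts given by the fibers of `P`: every edge contains
exactly one vertex from each part. -/
def IsPartite [DecidableEq V] (H : HyperGraph k V) (P : V → Fin k) : Prop :=
  ∀ e ∈ H.edges, ∀ i : Fin k, (e.filter fun v => P v = i).card = 1

/-- `G` contains a copy of `H`. -/
def ContainsCopy [DecidableEq V] [DecidableEq W] (G : HyperGraph k W) (H : HyperGraph k V) :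
    Prop :=
  ∃ f : V → W, Function.Injective f ∧ ∀ e ∈ H.edges, e.image f ∈ G.edges

end HyperGraph

/-- The Turán number `ex(n, H)`: the maximum number of edges in a `k`-uniform hypergraph
on `n` vertices containing no copy of `H`. -/
noncomputable def turanNumber (k n : ℕ) {V : Type} [DecidableEq V] (H : HyperGraph k V) : ℕ :=
  sSup {m | ∃ G : HyperGraph k (Fin n), G.edges.card = m ∧ ¬ G.ContainsCopy H}

/-- The `q`-color Ramsey number `r(H; q)`: the least `N` such that every `q`-coloring of the
`k`-subsets of an `N`-set contains a monochromatic copy of `H`. -/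
noncomputable def ramseyNumber (k q : ℕ) {V : Type} [DecidableEq V] (H : HyperGraph k V) : ℕ :=
  sInf {N | ∀ c : Finset (Fin N) → Fin q,
    ∃ (f : V → Fin N) (i : Fin q), Function.Injective f ∧
      ∀ e ∈ H.edges, c (e.image f) = i}
/-- The edge set of the `(k-2)`-skeleton of `G` induced on vertex set `S`:
all `(k-1)`-element subsets of `S` contained in an edge of `G`. -/
def inducedSkel {k n : ℕ} (G : HyperGraph k (Fin k × Fin n)) (S : Finset (Fin k × Fin n)) :
    Finset (Finset (Fin k × Fin n)) :=
  (S.powersetCard (k - 1)).filter fun s => ∃ e ∈ G.edges, s ⊆ e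

/-- The set of mutual extensions, in part `t`, of the `(k-1)`-edges induced on `S`. -/
def mutualExt {k n : ℕ} (G : HyperGraph k (Fin k × Fin n)) (t : Fin k)
    (S : Finset (Fin k × Fin n)) : Finset (Fin k × Fin n) :=
  Finset.univ.filter fun v => v.1 = t ∧ ∀ s ∈ inducedSkel G S, insert v s ∈ G.edges

/-- `G` is `(a, d)`-vertex-extending to part `t`: every set `S` of at most `d` vertices
outside part `t` has at least `a` mutual extensions in part `t` of the `(k-1)`-edges
induced on `S`. -/
def VertexExtending {k n : ℕ} (G : HyperGraph k (Fin k × Fin n)) (a : ℝ) (d : ℕ)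
    (t : Fin k) : Prop :=
  ∀ S : Finset (Fin k × Fin n), (∀ v ∈ S, v.1 ≠ t) → S.card ≤ d →
    a ≤ ((mutualExt G t S).card : ℝ)

/-!
Dependent random choice. Choose `m = λd` vertices `(t, f i)` of part `t`, with repetition,
and keep the edges `e` whose face `e ∖ V_t` extends to every chosen vertex. Summed over all `f`,
the number of kept edges is `∑_σ N(σ)^(m+1)`, where `N(σ)` is the number of extensions of the
face `σ` into `V_t`; by the power-mean inequality this is at least `p^(m+1) n^(k+m)`. If `f` is
bad, some `d`-set `S` outside `V_t` has fewer than `h` mutual extensions in the kept graph, so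
every `f i` is a common extension of a family of faces on `S` that has fewer than `h` of them;
there are at most `C(kn, d) 2^C(d, k-1) h^m ≤ n^(m-1)` such `f`, so some good `f` keeps at
least `p^((λ+1)d) n^k` edges. Extension to an earlier part `r < t` survives, because a mutual
extension in `G` of `S` together with the chosen vertices is a mutual extension of `S` in the
kept graph.
-/

lemma exists_notMem_le_of_card_mul_add_le {ι : Type*} [Fintype ι] [Nonempty ι] {w : ι → ℝ}
    {B : Finset ι} {c M : ℝ} (hc : 0 < c) (hw : ∀ i, w i ≤ M)
    (h : Fintype.card ι * c + #B * M ≤ ∑ i, w i) : ∃ i ∉ B, c ≤ w i := by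
  classical
  have hB : ∑ i ∈ B, w i ≤ #B * M := by
    simpa using sum_le_card_nsmul B w M fun i _ => hw i
  have hBc : Fintype.card ι * c ≤ ∑ i ∈ Bᶜ, w i := by
    linarith [sum_add_sum_compl B w]
  have hne : Bᶜ.Nonempty := by
    refine nonempty_iff_ne_empty.2 fun hB => ?_
    rw [hB, sum_empty] at hBc
    linarith [mul_pos (Nat.cast_pos.2 (Fintype.card_pos (α := ι))) hc]
  obtain ⟨i, hi, hci⟩ := exists_le_of_sum_le hne (f := fun _ => c) (g := w) <| by
    rw [sum_const, nsmul_eq_mul]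
    exact (mul_le_mul_of_nonneg_right (by exact_mod_cast card_le_univ _) hc.le).trans hBc
  exact ⟨i, mem_compl.1 hi, hci⟩

lemma two_pow_le_of_one_le_pow_mul {p x : ℝ} {a : ℕ} (hp0 : 0 < p) (hp : p < 1 / 2)
    (h : 1 ≤ p ^ a * x) : 2 ^ a ≤ x := by
  have hx : 0 ≤ x := by
    by_contra! hx
    linarith [mul_neg_of_pos_of_neg (pow_pos hp0 a) hx]
  have : 2 ^ a * p ^ a ≤ 1 := by
    rw [← mul_pow]
    exact pow_le_one₀ (by positivity) (by linarith)
  nlinarith [pow_pos (two_pos (α := ℝ)) a]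

lemma mul_add_mul_le_pow_mul {p x B : ℝ} {k m d : ℕ} (hd : 2 ≤ d) (hp0 : 0 < p)
    (hp : p < 1 / 2) (h1 : 1 ≤ p ^ (m + d) * x) (hB : B * x ≤ x ^ m) :
    x ^ m * (p ^ (m + d) * x ^ k) + B * x ^ k ≤ p ^ (m + 1) * x ^ (k + m) := by
  have hx : 0 < x := by
    by_contra! hx
    linarith [mul_nonpos_of_nonneg_of_nonpos (pow_pos hp0 (m + d)).le hx]
  have hpow : 2 * p ^ (m + d) ≤ p ^ (m + 1) := by
    calc 2 * p ^ (m + d) ≤ 2 * p ^ (m + 1 + 1) :=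
          mul_le_mul_of_nonneg_left (pow_le_pow_of_le_one hp0.le (by linarith) (by omega))
            zero_le_two
      _ ≤ p ^ (m + 1) := by rw [pow_succ]; nlinarith [pow_pos hp0 (m + 1)]
  have hBx : B * x ^ k ≤ p ^ (m + d) * x ^ (k + m) := by
    have : B * x ^ k * x ≤ p ^ (m + d) * x ^ (k + m) * x := by
      calc B * x ^ k * x = B * x * x ^ k := by ring
        _ ≤ x ^ m * x ^ k := mul_le_mul_of_nonneg_right hB (by positivity)
        _ ≤ p ^ (m + d) * x * (x ^ m * x ^ k) := le_mul_of_one_le_left (by positivity) h1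
        _ = p ^ (m + d) * x ^ (k + m) * x := by ring
    exact le_of_mul_le_mul_right this hx
  have hfirst : x ^ m * (p ^ (m + d) * x ^ k) = p ^ (m + d) * x ^ (k + m) := by ring
  rw [hfirst]
  linarith [mul_le_mul_of_nonneg_right hpow (pow_pos hx (k + m)).le]

lemma mul_le_pow_of_div_pow_mul_le_inv {b h x A : ℝ} {m : ℕ} (hx : 0 < x)
    (hb : b ≤ A * h ^ m) (hA : (h / x) ^ m * A ≤ x⁻¹) : b * x ≤ x ^ m :=
  calc b * x ≤ A * h ^ m * x := mul_le_mul_of_nonneg_right hb hx.le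
    _ = (h / x) ^ m * A * x ^ m * x := by rw [div_pow]; field_simp
    _ ≤ x⁻¹ * x ^ m * x := by gcongr
    _ = x ^ m := by field_simp

namespace HyperGraph

variable {k n : ℕ}

def dropPart (t : Fin k) (e : Finset (Fin k × Fin n)) : Finset (Fin k × Fin n) :=
  e.filter fun v => v.1 ≠ t

@[simp]
lemma mem_dropPart {t : Fin k} {e : Finset (Fin k × Fin n)} {v : Fin k × Fin n} :
    v ∈ dropPart t e ↔ v ∈ e ∧ v.1 ≠ t :=
  mem_filter

lemma dropPart_subset (t : Fin k) (e : Finset (Fin k × Fin n)) : dropPart t e ⊆ e :=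
  filter_subset _ _

lemma dropPart_comm (r t : Fin k) (e : Finset (Fin k × Fin n)) :
    dropPart r (dropPart t e) = dropPart t (dropPart r e) := by
  ext v; simp only [mem_dropPart]; tauto

lemma dropPart_eq_self {t : Fin k} {σ : Finset (Fin k × Fin n)} (hσ : ∀ v ∈ σ, v.1 ≠ t) :
    dropPart t σ = σ :=
  filter_true_of_mem hσ

lemma dropPart_insert_of_fst_eq {t : Fin k} {v : Fin k × Fin n} (hv : v.1 = t)
    (σ : Finset (Fin k × Fin n)) : dropPart t (insert v σ) = dropPart t σ := by
  simp [dropPart, filter_insert, hv]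

lemma dropPart_insert_of_fst_ne {t : Fin k} {v : Fin k × Fin n} (hv : v.1 ≠ t)
    (σ : Finset (Fin k × Fin n)) : dropPart t (insert v σ) = insert v (dropPart t σ) := by
  simp [dropPart, filter_insert, hv]

namespace IsPartite

variable {G : HyperGraph k (Fin k × Fin n)} {e : Finset (Fin k × Fin n)}

lemma eq_of_fst_eq (hG : G.IsPartite Prod.fst) (he : e ∈ G.edges) {u w : Fin k × Fin n}
    (hu : u ∈ e) (hw : w ∈ e) (huw : u.1 = w.1) : u = w :=
  card_le_one.1 (hG e he w.1).le u (mem_filter.2 ⟨hu, huw⟩) w (mem_filter.2 ⟨hw, rfl⟩)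

lemma exists_mem (hG : G.IsPartite Prod.fst) (he : e ∈ G.edges) (i : Fin k) :
    ∃ j, (i, j) ∈ e := by
  obtain ⟨w, hw⟩ := card_eq_one.1 (hG e he i)
  obtain ⟨hwe, rfl⟩ := mem_filter.1 (hw ▸ mem_singleton_self w)
  exact ⟨w.2, hwe⟩

lemma card_dropPart (hG : G.IsPartite Prod.fst) (he : e ∈ G.edges) (t : Fin k) :
    #(dropPart t e) = k - 1 := by
  have := card_filter_add_card_filter_not (s := e) (p := fun v => v.1 = t)
  rw [hG e he t, G.card_eq e he] at this
  simp only [dropPart, ne_eq]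
  omega

lemma insert_dropPart (hG : G.IsPartite Prod.fst) (he : e ∈ G.edges) (t : Fin k) :
    ∃ j, insert (t, j) (dropPart t e) = e := by
  obtain ⟨j, hj⟩ := hG.exists_mem he t
  refine ⟨j, Subset.antisymm (insert_subset hj (dropPart_subset t e)) fun v hv => ?_⟩
  by_cases hvt : v.1 = t
  · exact mem_insert.2 (Or.inl (hG.eq_of_fst_eq he hv hj hvt))
  · exact mem_insert_of_mem (mem_dropPart.2 ⟨hv, hvt⟩)

lemma eq_dropPart_of_subset (hG : G.IsPartite Prod.fst) (he : e ∈ G.edges)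
    {σ : Finset (Fin k × Fin n)} (hσe : σ ⊆ e) (hσ : #σ = k - 1) {t : Fin k}
    (hσt : ∀ v ∈ σ, v.1 ≠ t) : σ = dropPart t e :=
  eq_of_subset_of_card_le (fun v hv => mem_dropPart.2 ⟨hσe hv, hσt v hv⟩)
    (by rw [hG.card_dropPart he, hσ])

end IsPartite

section InducedSkeleton

variable {G G' : HyperGraph k (Fin k × Fin n)} {S S' σ : Finset (Fin k × Fin n)}

lemma mem_inducedSkel :
    σ ∈ inducedSkel G S ↔ σ ⊆ S ∧ #σ = k - 1 ∧ ∃ e ∈ G.edges, σ ⊆ e := by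
  rw [inducedSkel, mem_filter, mem_powersetCard, and_assoc]

lemma inducedSkel_mono (hG : G'.edges ⊆ G.edges) (hS : S ⊆ S') :
    inducedSkel G' S ⊆ inducedSkel G S' := fun σ hσ => by
  obtain ⟨hσS, hσ, e, he, hσe⟩ := mem_inducedSkel.1 hσ
  exact mem_inducedSkel.2 ⟨hσS.trans hS, hσ, e, hG he, hσe⟩

lemma mutualExt_anti (t : Fin k) (hS : S ⊆ S') : mutualExt G t S' ⊆ mutualExt G t S :=
  fun v hv => by
    simp only [mutualExt, mem_filter] at hv ⊢
    exact ⟨hv.1, hv.2.1, fun σ hσ => hv.2.2 σ (inducedSkel_mono subset_rfl hS hσ)⟩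

end InducedSkeleton

def link (G : HyperGraph k (Fin k × Fin n)) (t : Fin k) (σ : Finset (Fin k × Fin n)) :
    Finset (Fin n) :=
  univ.filter fun j => insert (t, j) σ ∈ G.edges

def commonLink (G : HyperGraph k (Fin k × Fin n)) (t : Fin k)
    (F : Finset (Finset (Fin k × Fin n))) : Finset (Fin n) :=
  univ.filter fun j => ∀ σ ∈ F, insert (t, j) σ ∈ G.edges

-- The subgraph kept by dependent random choice when the vertices `(t, f i)` are chosen.
def restrictLink (G : HyperGraph k (Fin k × Fin n)) (t : Fin k) {ι : Type*} [Fintype ι]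
    (f : ι → Fin n) :
    HyperGraph k (Fin k × Fin n) where
  edges := G.edges.filter fun e => ∀ i, f i ∈ G.link t (dropPart t e)
  card_eq e he := G.card_eq e (mem_filter.1 he).1

section RestrictLink

variable {G : HyperGraph k (Fin k × Fin n)} {t : Fin k} {ι : Type*} [Fintype ι]
  {f : ι → Fin n} {S σ e : Finset (Fin k × Fin n)}

lemma mem_restrictLink :
    e ∈ (G.restrictLink t f).edges ↔
      e ∈ G.edges ∧ ∀ i, insert (t, f i) (dropPart t e) ∈ G.edges := by
  simp [restrictLink, link]

lemma restrictLink_edges_subset : (G.restrictLink t f).edges ⊆ G.edges :=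
  filter_subset _ _

lemma IsPartite.restrictLink (hG : G.IsPartite Prod.fst) :
    (G.restrictLink t f).IsPartite Prod.fst :=
  fun e he => hG e (restrictLink_edges_subset he)

lemma IsPartite.insert_mem_of_mem_inducedSkel_restrictLink (hG : G.IsPartite Prod.fst)
    (hS : ∀ v ∈ S, v.1 ≠ t) (hσ : σ ∈ inducedSkel (G.restrictLink t f) S) (i : ι) :
    insert (t, f i) σ ∈ G.edges := by
  obtain ⟨hσS, hσ, e, he, hσe⟩ := mem_inducedSkel.1 hσ
  rw [hG.restrictLink.eq_dropPart_of_subset he hσe hσ fun v hv => hS v (hσS hv)]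
  exact (mem_restrictLink.1 he).2 i

lemma IsPartite.card_commonLink_le_card_mutualExt (hG : G.IsPartite Prod.fst)
    (hS : ∀ v ∈ S, v.1 ≠ t) :
    #(G.commonLink t (inducedSkel (G.restrictLink t f) S)) ≤
      #(mutualExt (G.restrictLink t f) t S) := by
  refine card_le_card_of_injOn (fun j => (t, j)) (fun j hj => ?_)
    (fun _ _ _ _ h => (Prod.ext_iff.1 h).2)
  simp only [commonLink, mutualExt, coe_filter, mem_univ, true_and] at hj ⊢
  refine ⟨rfl, fun σ hσ => mem_restrictLink.2 ⟨hj σ hσ, fun i => ?_⟩⟩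
  have hσt : ∀ v ∈ σ, v.1 ≠ t := fun v hv => hS v ((mem_inducedSkel.1 hσ).1 hv)
  rw [dropPart_insert_of_fst_eq (v := (t, j)) rfl, dropPart_eq_self hσt]
  exact hG.insert_mem_of_mem_inducedSkel_restrictLink hS hσ i

lemma IsPartite.mutualExt_subset_mutualExt_restrictLink
    (hG : G.IsPartite Prod.fst) {r : Fin k} (hrt : r ≠ t) (hS : ∀ v ∈ S, v.1 ≠ r) :
    mutualExt G r (S ∪ univ.image fun i => (t, f i)) ⊆ mutualExt (G.restrictLink t f) r S := by
  intro v hv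
  simp only [mutualExt, mem_filter, mem_univ, true_and] at hv ⊢
  obtain ⟨hvr, hvext⟩ := hv
  refine ⟨hvr, fun σ hσ => ?_⟩
  obtain ⟨hσS, hσ, e, he, hσe⟩ := mem_inducedSkel.1 hσ
  obtain ⟨heG, hef⟩ := mem_restrictLink.1 he
  have hσr : σ = dropPart r e := hG.eq_dropPart_of_subset heG hσe hσ fun u hu => hS u (hσS hu)
  refine mem_restrictLink.2
    ⟨hvext σ (mem_inducedSkel.2 ⟨hσS.trans subset_union_left, hσ, e, heG, hσe⟩), fun i => ?_⟩
  -- `v` extends the face opposite to part `r` of the edge `insert (t, f i) (dropPart t e)`,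
  -- since that face lies in `S` plus the chosen vertices
  have hτ : dropPart r (insert (t, f i) (dropPart t e)) = insert (t, f i) (dropPart t σ) := by
    rw [dropPart_insert_of_fst_ne hrt.symm, dropPart_comm, ← hσr]
  have hτS : dropPart r (insert (t, f i) (dropPart t e)) ∈
      inducedSkel G (S ∪ univ.image fun i => (t, f i)) := by
    refine mem_inducedSkel.2 ⟨?_, hG.card_dropPart (hef i) r, _, hef i, dropPart_subset _ _⟩
    rw [hτ]
    exact insert_subset (mem_union_right _ (mem_image_of_mem _ (mem_univ i)))
      ((dropPart_subset _ _).trans (hσS.trans subset_union_left))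
  have := hvext _ hτS
  rwa [hτ, insert_comm, ← dropPart_insert_of_fst_ne (hvr ▸ hrt)] at this

lemma IsPartite.vertexExtending_restrictLink (hG : G.IsPartite Prod.fst)
    {r : Fin k} (hrt : r ≠ t) {a : ℝ} {d : ℕ}
    (hext : VertexExtending G a (d + Fintype.card ι) r) :
    VertexExtending (G.restrictLink t f) a d r := by
  intro S hS hSd
  have hT : ∀ v ∈ S ∪ univ.image fun i => (t, f i), v.1 ≠ r := by
    simp only [mem_union, mem_image, mem_univ, true_and]
    rintro v (hv | ⟨i, rfl⟩)
    exacts [hS v hv, hrt.symm]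
  have hTcard : #(S ∪ univ.image fun i => (t, f i)) ≤ d + Fintype.card ι :=
    (card_union_le _ _).trans (add_le_add hSd card_image_le)
  exact (hext _ hT hTcard).trans
    (by exact_mod_cast card_le_card (hG.mutualExt_subset_mutualExt_restrictLink hrt hS))

end RestrictLink

namespace IsPartite

variable {G : HyperGraph k (Fin k × Fin n)} {t : Fin k}

lemma card_fiber_dropPart (hG : G.IsPartite Prod.fst) {σ : Finset (Fin k × Fin n)}
    (hσ : ∀ v ∈ σ, v.1 ≠ t) : #{e ∈ G.edges | dropPart t e = σ} = #(G.link t σ) := by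
  refine (card_nbij (fun j => insert (t, j) σ) (fun j hj => ?_) (fun j₁ _ j₂ _ h => ?_)
    (fun e he => ?_)).symm
  · have hj : insert (t, j) σ ∈ G.edges := (mem_filter.1 hj).2
    simpa [hj, dropPart_insert_of_fst_eq (v := (t, j)) rfl] using dropPart_eq_self hσ
  · have : (t, j₁) ∈ insert (t, j₂) σ := by
      rw [← show insert (t, j₁) σ = insert (t, j₂) σ from h]
      exact mem_insert_self _ _
    rcases mem_insert.1 this with h | h
    exacts [(Prod.ext_iff.1 h).2, absurd rfl (hσ _ h)]
  · obtain ⟨heG, rfl⟩ := mem_filter.1 (mem_coe.1 he)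
    obtain ⟨j, hj⟩ := hG.insert_dropPart heG t
    exact ⟨j, mem_filter.2 ⟨mem_univ j, by rw [hj]; exact heG⟩, hj⟩

lemma sum_card_link (hG : G.IsPartite Prod.fst) :
    ∑ σ ∈ G.edges.image (dropPart t), #(G.link t σ) = #G.edges := by
  rw [card_eq_sum_card_fiberwise fun e he => mem_image_of_mem (dropPart t) he]
  refine sum_congr rfl fun σ hσ => (hG.card_fiber_dropPart ?_).symm
  obtain ⟨e, -, rfl⟩ := mem_image.1 hσ
  exact fun v hv => (mem_dropPart.1 hv).2

lemma sum_card_restrictLink (hG : G.IsPartite Prod.fst) (ι : Type*) [Fintype ι]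
    [DecidableEq ι] :
    ∑ f : ι → Fin n, #(G.restrictLink t f).edges =
      ∑ σ ∈ G.edges.image (dropPart t), #(G.link t σ) ^ (Fintype.card ι + 1) := by
  have hpi : ∀ e, #{f : ι → Fin n | ∀ i, f i ∈ G.link t (dropPart t e)} =
      #(G.link t (dropPart t e)) ^ Fintype.card ι := fun e => by
    have : univ.filter (fun f : ι → Fin n => ∀ i, f i ∈ G.link t (dropPart t e)) =
        Fintype.piFinset fun _ => G.link t (dropPart t e) := by
      ext f
      simp [Fintype.mem_piFinset]
    rw [this, Fintype.card_piFinset, prod_const, card_univ]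
  calc ∑ f : ι → Fin n, #(G.restrictLink t f).edges
      = ∑ f : ι → Fin n, ∑ e ∈ G.edges,
          if ∀ i, f i ∈ G.link t (dropPart t e) then 1 else 0 :=
        sum_congr rfl fun f _ => card_filter _ _
    _ = ∑ e ∈ G.edges, #{f : ι → Fin n | ∀ i, f i ∈ G.link t (dropPart t e)} := by
        rw [sum_comm]
        simp only [card_filter]
    _ = ∑ e ∈ G.edges, #(G.link t (dropPart t e)) ^ Fintype.card ι :=
        sum_congr rfl fun e _ => hpi e
    _ = ∑ σ ∈ G.edges.image (dropPart t), ∑ e ∈ G.edges with dropPart t e = σ,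
          #(G.link t σ) ^ Fintype.card ι :=
        (sum_fiberwise_of_maps_to' (g := dropPart t) (fun e he => mem_image_of_mem _ he)
          fun σ => #(G.link t σ) ^ Fintype.card ι).symm
    _ = _ := by
        refine sum_congr rfl fun σ hσ => ?_
        obtain ⟨e, -, rfl⟩ := mem_image.1 hσ
        rw [sum_const, hG.card_fiber_dropPart fun v hv => (mem_dropPart.1 hv).2, smul_eq_mul,
          pow_succ']

lemma card_image_dropPart_le (hG : G.IsPartite Prod.fst) :
    #(G.edges.image (dropPart t)) ≤ n ^ (k - 1) := by
  have hsub : G.edges.image (dropPart t) ⊆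
      univ.image fun g : {i // i ≠ t} → Fin n => univ.image fun i => (i.1, g i) := by
    intro σ hσ
    obtain ⟨e, he, rfl⟩ := mem_image.1 hσ
    choose g hg using fun i : {i // i ≠ t} => hG.exists_mem he i.1
    refine mem_image.2 ⟨g, mem_univ g, ?_⟩
    ext ⟨a, b⟩
    simp only [mem_image, mem_univ, true_and, mem_dropPart, Prod.mk.injEq]
    constructor
    · rintro ⟨i, rfl, rfl⟩
      exact ⟨hg i, i.2⟩
    · rintro ⟨hab, ha⟩
      exact ⟨⟨a, ha⟩, rfl, (Prod.ext_iff.1 (hG.eq_of_fst_eq he (hg ⟨a, ha⟩) hab rfl)).2⟩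
  calc #(G.edges.image (dropPart t)) ≤ _ := card_le_card hsub
    _ ≤ Fintype.card ({i // i ≠ t} → Fin n) := card_image_le.trans (card_le_univ _)
    _ = n ^ (k - 1) := by simp [Fintype.card_subtype_compl]

lemma card_edges_le (hG : G.IsPartite Prod.fst) (t : Fin k) : #G.edges ≤ n ^ k := by
  calc #G.edges = ∑ σ ∈ G.edges.image (dropPart t), #(G.link t σ) := hG.sum_card_link.symm
    _ ≤ #(G.edges.image (dropPart t)) * n :=
        sum_le_card_nsmul _ _ _ fun σ _ => (card_le_univ _).trans (Fintype.card_fin n).le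
    _ ≤ n ^ (k - 1) * n := Nat.mul_le_mul_right n hG.card_image_dropPart_le
    _ = n ^ k := by rw [← pow_succ, Nat.sub_add_cancel t.pos]

lemma pow_mul_le_sum_card_restrictLink (hG : G.IsPartite Prod.fst) (t : Fin k) (ι : Type*)
    [Fintype ι] [DecidableEq ι] (hn : 0 < n) {p : ℝ} (hp : 0 ≤ p)
    (hE : p * (n : ℝ) ^ k ≤ #G.edges) :
    p ^ (Fintype.card ι + 1) * (n : ℝ) ^ (k + Fintype.card ι) ≤
      ∑ f : ι → Fin n, (#(G.restrictLink t f).edges : ℝ) := by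
  set m := Fintype.card ι
  set β := G.edges.image (dropPart t)
  have hsum : ∑ f : ι → Fin n, (#(G.restrictLink t f).edges : ℝ) =
      ∑ σ ∈ β, (#(G.link t σ) : ℝ) ^ (m + 1) := by
    exact_mod_cast hG.sum_card_restrictLink ι
  have hlink : ∑ σ ∈ β, (#(G.link t σ) : ℝ) = #G.edges := by exact_mod_cast hG.sum_card_link
  have hβ : (#β : ℝ) ≤ (n : ℝ) ^ (k - 1) := by exact_mod_cast hG.card_image_dropPart_le
  have hexp : ((n : ℝ) ^ (k - 1)) ^ m * (p ^ (m + 1) * (n : ℝ) ^ (k + m)) =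
      (p * (n : ℝ) ^ k) ^ (m + 1) := by
    obtain ⟨k, rfl⟩ : ∃ k', k = k' + 1 := ⟨k - 1, (Nat.sub_add_cancel t.pos).symm⟩
    rw [Nat.add_sub_cancel]
    ring
  refine le_of_mul_le_mul_left ?_ (by positivity : (0 : ℝ) < ((n : ℝ) ^ (k - 1)) ^ m)
  rw [hexp, hsum]
  calc (p * (n : ℝ) ^ k) ^ (m + 1) ≤ (∑ σ ∈ β, (#(G.link t σ) : ℝ)) ^ (m + 1) := by
        rw [hlink]
        exact pow_le_pow_left₀ (by positivity) hE _
    _ ≤ (#β : ℝ) ^ m * ∑ σ ∈ β, (#(G.link t σ) : ℝ) ^ (m + 1) :=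
        pow_sum_le_card_mul_sum_pow (fun _ _ => Nat.cast_nonneg _) m
    _ ≤ _ := mul_le_mul_of_nonneg_right (pow_le_pow_left₀ (Nat.cast_nonneg _) hβ m)
        (sum_nonneg fun _ _ => by positivity)

lemma exists_card_le_forall_vertexExtending_restrictLink (hG : G.IsPartite Prod.fst)
    (t : Fin k) (ι : Type*) [Fintype ι] [DecidableEq ι] (h d : ℕ) (hd : d ≤ (k - 1) * n) :
    ∃ B : Finset (ι → Fin n),
      #B ≤ ((k - 1) * n).choose d * 2 ^ d.choose (k - 1) * h ^ Fintype.card ι ∧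
      ∀ f ∉ B, VertexExtending (G.restrictLink t f) h d t := by
  set V : Finset (Fin k × Fin n) := univ.filter fun v => v.1 ≠ t
  have hV : #V = (k - 1) * n := by
    rw [show V = (univ.erase t) ×ˢ univ by ext; simp [V]]
    simp
  -- a bad `f` has, for some `d`-set `S ⊆ V`, every `f i` in the common link of a family of
  -- faces on `S` whose common link has fewer than `h` vertices
  refine ⟨(V.powersetCard d).biUnion fun S =>
      {F ∈ (inducedSkel G S).powerset | #(G.commonLink t F) < h}.biUnion fun F =>
        Fintype.piFinset fun _ => G.commonLink t F, ?_, ?_⟩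
  · rw [← hV, ← card_powersetCard, mul_assoc]
    refine card_biUnion_le_card_mul _ _ _ fun S hS => ?_
    refine (card_biUnion_le_card_mul _ _ (h ^ Fintype.card ι) fun F hF => ?_).trans ?_
    · rw [Fintype.card_piFinset, prod_const, card_univ]
      exact Nat.pow_le_pow_left (mem_filter.1 hF).2.le _
    · refine Nat.mul_le_mul_right _ ((card_filter_le _ _).trans ?_)
      rw [card_powerset, ← (mem_powersetCard.1 hS).2, ← card_powersetCard]
      exact Nat.pow_le_pow_right two_pos (card_le_card (filter_subset _ _))
  · intro f hf S hS hSd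
    by_contra! hlt
    replace hlt : #(mutualExt (G.restrictLink t f) t S) < h := by exact_mod_cast hlt
    obtain ⟨S', hSS', hS'V, hS'd⟩ := exists_subsuperset_card_eq
      (fun v hv => mem_filter.2 ⟨mem_univ v, hS v hv⟩ : S ⊆ V) hSd (hV ▸ hd)
    have hS' : ∀ v ∈ S', v.1 ≠ t := fun v hv => (mem_filter.1 (hS'V hv)).2
    have hcard : #(G.commonLink t (inducedSkel (G.restrictLink t f) S')) < h :=
      (hG.card_commonLink_le_card_mutualExt hS').trans_lt
        ((card_le_card (mutualExt_anti t hSS')).trans_lt hlt)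
    refine hf (mem_biUnion.2 ⟨S', mem_powersetCard.2 ⟨hS'V, hS'd⟩, mem_biUnion.2
      ⟨_, mem_filter.2 ⟨mem_powerset.2 (inducedSkel_mono restrictLink_edges_subset subset_rfl),
        hcard⟩, Fintype.mem_piFinset.2 fun i => ?_⟩⟩)
    simpa [commonLink] using fun σ hσ => hG.insert_mem_of_mem_inducedSkel_restrictLink hS' hσ i

end IsPartite

end HyperGraph

theorem dependent_random_choice_step_general (d k h n lam : ℕ) (t : Fin k)
    (hd : 2 ≤ d) (hk : 3 ≤ k)
    (p : ℝ) (hp0 : 0 < p) (hp : p < 1 / 2)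
    (h1 : 1 ≤ p ^ ((lam + 1) * d) * (n : ℝ))
    (h2 : ((h : ℝ) / (n : ℝ)) ^ (lam * d) * ((Nat.choose (k * n) d : ℕ) : ℝ) *
        (2 : ℝ) ^ (Nat.choose d (k - 1)) ≤ ((n : ℝ))⁻¹)
    (G : HyperGraph k (Fin k × Fin n)) (hG : G.IsPartite Prod.fst)
    (hE : p * (n : ℝ) ^ k ≤ (G.edges.card : ℝ))
    (hext : ∀ r : Fin k, r < t → VertexExtending G (h : ℝ) ((lam + 1) * d) r) :
    ∃ G' : HyperGraph k (Fin k × Fin n), G'.edges ⊆ G.edges ∧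
      p ^ ((lam + 1) * d) * (n : ℝ) ^ k ≤ (G'.edges.card : ℝ) ∧
      ∀ r : Fin k, r ≤ t → VertexExtending G' (h : ℝ) d r := by
  set m := lam * d
  rw [show (lam + 1) * d = m + d by ring] at h1 hext ⊢
  have hn : 2 ^ (m + d) ≤ n := by exact_mod_cast two_pow_le_of_one_le_pow_mul hp0 hp h1
  have hn0 : 0 < n := Nat.one_le_two_pow.trans hn
  have hdn : d ≤ (k - 1) * n :=
    calc d ≤ 2 ^ (m + d) :=
          Nat.lt_two_pow_self.le.trans (Nat.pow_le_pow_right two_pos (by omega))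
      _ ≤ (k - 1) * n := hn.trans (Nat.le_mul_of_pos_left n (by omega))
  obtain ⟨B, hB, hgood⟩ :=
    hG.exists_card_le_forall_vertexExtending_restrictLink t (Fin m) h d hdn
  rw [Fintype.card_fin] at hB
  have hBn : (#B : ℝ) * n ≤ (n : ℝ) ^ m := by
    refine mul_le_pow_of_div_pow_mul_le_inv (A := (k * n).choose d * 2 ^ d.choose (k - 1))
      (by positivity) ?_ (by rw [← mul_assoc]; exact_mod_cast h2)
    exact_mod_cast hB.trans (Nat.mul_le_mul_right _ (Nat.mul_le_mul_right _
      (Nat.choose_le_choose d (Nat.mul_le_mul_right n (Nat.sub_le k 1)))))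
  have hsum := hG.pow_mul_le_sum_card_restrictLink t (Fin m) hn0 hp0.le hE
  rw [Fintype.card_fin] at hsum
  have : Nonempty (Fin m → Fin n) := ⟨fun _ => ⟨0, hn0⟩⟩
  obtain ⟨f, hfB, hf⟩ := exists_notMem_le_of_card_mul_add_le (B := B)
    (w := fun f => (#(G.restrictLink t f).edges : ℝ)) (c := p ^ (m + d) * (n : ℝ) ^ k)
    (M := (n : ℝ) ^ k) (by positivity)
    (fun f => by exact_mod_cast (hG.restrictLink (f := f)).card_edges_le t)
    (by simpa using (mul_add_mul_le_pow_mul hd hp0 hp h1 hBn).trans hsum)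
  refine ⟨G.restrictLink t f, HyperGraph.restrictLink_edges_subset, hf, fun r hr => ?_⟩
  rcases hr.lt_or_eq with hrt | rfl
  · exact hG.vertexExtending_restrictLink hrt.ne (by simpa [add_comm] using hext r hrt)
  · exact hgood f hfB

/-- **Lemma (dependent random choice step).** Let `d ≥ 2`, `k ≥ 3`, `t ∈ [k]`,
`h, n, λ ≥ 1`, `p ∈ (0, 1/2)` with `p^((λ+1)d)·n ≥ 1` and
`(h/n)^(λd)·C(kn,d)·2^C(d,k−1) ≤ n⁻¹`. If `G` is `k`-partite `k`-uniform with `n`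
vertices in each part, at least `p·n^k` edges, and `(h,(λ+1)d)`-vertex-extending to
every part before `t`, then some subhypergraph `G'` on the same vertex set has at least
`p^((λ+1)d)·n^k` edges and is `(h,d)`-vertex-extending to every part up to `t`. -/
theorem dependent_random_choice_step (d k h n lam : ℕ) (t : Fin k)
    (hd : 2 ≤ d) (hk : 3 ≤ k) (hh : 1 ≤ h) (hn : 1 ≤ n) (hlam : 1 ≤ lam)
    (p : ℝ) (hp0 : 0 < p) (hp : p < 1 / 2)
    (h1 : 1 ≤ p ^ ((lam + 1) * d) * (n : ℝ))
    (h2 : ((h : ℝ) / (n : ℝ)) ^ (lam * d) * ((Nat.choose (k * n) d : ℕ) : ℝ) *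
        (2 : ℝ) ^ (Nat.choose d (k - 1)) ≤ ((n : ℝ))⁻¹)
    (G : HyperGraph k (Fin k × Fin n)) (hG : G.IsPartite Prod.fst)
    (hE : p * (n : ℝ) ^ k ≤ (G.edges.card : ℝ))
    (hext : ∀ r : Fin k, r < t → VertexExtending G (h : ℝ) ((lam + 1) * d) r) :
    ∃ G' : HyperGraph k (Fin k × Fin n), G'.edges ⊆ G.edges ∧
      p ^ ((lam + 1) * d) * (n : ℝ) ^ k ≤ (G'.edges.card : ℝ) ∧
      ∀ r : Fin k, r ≤ t → VertexExtending G' (h : ℝ) d r :=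
  dependent_random_choice_step_general d k h n lam t hd hk p hp0 hp h1 h2 G hG hE hext
end

section
/- Let d ≥ 4, k ≥ 3, and t be positive integers with 1 ≤ t ≤ k. For every ε ∈ (0, 1/(3d)] there exists n_0 = n_0(k,d,ε) such that for all n ≥ n_0 the following holds. Let G be a k-partite k-uniform hypergraph on vertex set V_1 ⊔ ⋯ ⊔ V_k with n vertices in each part; suppose G is (n^{1/3}, 3d)-vertex-extending to V_r for all r < t and e(G) ≥ n^{k−ε}. Then there exist a subhypergraph G' of G on the same vertex set and a nonempty subset X_t ⊆ V_t such that: G' is (n^{1/3}, d)-vertex-extending to V_r for all r ≤ t; e(G') ≥ n^{k−3dε}; and the edges of G' are exactly those edges e ∈ E(G) satisfying (e \ V_t) ∪ {x} ∈ E(G) for every x ∈ X_t. -/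
open Finset

section DRCAux

variable {k n : ℕ}

private def drcPruned (t : Fin k) (G : HyperGraph k (Fin k × Fin n))
    (X : Finset (Fin k × Fin n)) : HyperGraph k (Fin k × Fin n) where
  edges := G.edges.filter fun e => ∀ x ∈ X, insert x (e.filter fun v => v.1 ≠ t) ∈ G.edges
  card_eq := fun e he => G.card_eq e (Finset.mem_of_mem_filter e he)

private lemma drc_mem_pruned {t : Fin k} {G : HyperGraph k (Fin k × Fin n)}
    {X : Finset (Fin k × Fin n)} {e : Finset (Fin k × Fin n)} :
    e ∈ (drcPruned t G X).edges ↔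
      e ∈ G.edges ∧ ∀ x ∈ X, insert x (e.filter fun v => v.1 ≠ t) ∈ G.edges :=
  Finset.mem_filter

private lemma drc_part_decomp {G : HyperGraph k (Fin k × Fin n)}
    (hG : G.IsPartite Prod.fst) {e : Finset (Fin k × Fin n)} (he : e ∈ G.edges) (p : Fin k) :
    ∃ v : Fin k × Fin n, v.1 = p ∧ v ∈ e ∧ (e.filter fun w => w.1 = p) = {v} ∧
      v ∉ (e.filter fun w => w.1 ≠ p) ∧
      e = insert v (e.filter fun w => w.1 ≠ p) ∧ (e.filter fun w => w.1 ≠ p).card = k - 1 := by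
  have h1 : (e.filter fun w => w.1 = p).card = 1 := hG e he p
  rw [Finset.card_eq_one] at h1
  obtain ⟨v, hv⟩ := h1
  have hvmem : v ∈ e.filter fun w => w.1 = p := hv ▸ Finset.mem_singleton_self v
  rw [Finset.mem_filter] at hvmem
  have hnot : v ∉ (e.filter fun w => w.1 ≠ p) := by
    simp [Finset.mem_filter, hvmem.2]
  have hins : e = insert v (e.filter fun w => w.1 ≠ p) := by
    ext w
    simp only [Finset.mem_insert, Finset.mem_filter]
    constructor
    · intro hw
      by_cases hwp : w.1 = p
      · left
        have : w ∈ e.filter fun u => u.1 = p := Finset.mem_filter.2 ⟨hw, hwp⟩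
        rw [hv] at this
        exact Finset.mem_singleton.1 this
      · exact Or.inr ⟨hw, hwp⟩
    · rintro (rfl | ⟨hw, -⟩)
      · exact hvmem.1
      · exact hw
  have hcard : (e.filter fun w => w.1 ≠ p).card = k - 1 := by
    have hk : e.card = k := G.card_eq e he
    have h2 := Finset.card_insert_of_notMem hnot
    rw [← hins, hk] at h2
    omega
  exact ⟨v, hvmem.2, hvmem.1, hv, hnot, hins, hcard⟩

private lemma drc_mem_skel {G : HyperGraph k (Fin k × Fin n)}
    {S s : Finset (Fin k × Fin n)} :
    s ∈ inducedSkel G S ↔ s ⊆ S ∧ s.card = k - 1 ∧ ∃ e ∈ G.edges, s ⊆ e := by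
  simp [inducedSkel, Finset.mem_powersetCard, and_assoc]

private lemma drc_eq_body {G : HyperGraph k (Fin k × Fin n)}
    (hG : G.IsPartite Prod.fst) {e s : Finset (Fin k × Fin n)} (he : e ∈ G.edges)
    (hse : s ⊆ e) (hcard : s.card = k - 1) {p : Fin k} (hs : ∀ w ∈ s, w.1 ≠ p) :
    s = e.filter fun w => w.1 ≠ p := by
  obtain ⟨v, -, -, -, -, -, hc⟩ := drc_part_decomp hG he p
  exact Finset.eq_of_subset_of_card_le
    (fun w hw => Finset.mem_filter.2 ⟨hse hw, hs w hw⟩) (by rw [hc, hcard])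

private lemma drc_skel_prop {t : Fin k} {G : HyperGraph k (Fin k × Fin n)}
    (hG : G.IsPartite Prod.fst) {X S : Finset (Fin k × Fin n)}
    (hS : ∀ v ∈ S, v.1 ≠ t) {s : Finset (Fin k × Fin n)}
    (hs : s ∈ inducedSkel (drcPruned t G X) S) :
    s ⊆ S ∧ s.card = k - 1 ∧ (∃ e ∈ G.edges, s ⊆ e) ∧ ∀ x ∈ X, insert x s ∈ G.edges := by
  rw [drc_mem_skel] at hs
  obtain ⟨hsS, hsc, e, heP, hse⟩ := hs
  rw [drc_mem_pruned] at heP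
  obtain ⟨he, hx⟩ := heP
  have hb : s = e.filter fun w => w.1 ≠ t :=
    drc_eq_body hG he hse hsc (fun w hw => hS w (hsS hw))
  exact ⟨hsS, hsc, ⟨e, he, hse⟩, fun x hxX => by rw [hb]; exact hx x hxX⟩

private lemma drc_mutualExt_t {t : Fin k} {G : HyperGraph k (Fin k × Fin n)}
    (hG : G.IsPartite Prod.fst) {X S : Finset (Fin k × Fin n)}
    (hS : ∀ v ∈ S, v.1 ≠ t) :
    mutualExt (drcPruned t G X) t S =
      Finset.univ.filter fun v => v.1 = t ∧
        ∀ s ∈ inducedSkel (drcPruned t G X) S, insert v s ∈ G.edges := by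
  ext v
  simp only [mutualExt, Finset.mem_filter, Finset.mem_univ, true_and]
  refine and_congr_right fun hv =>
    ⟨fun h s hs => (drc_mem_pruned.1 (h s hs)).1, fun h s hs => ?_⟩
  obtain ⟨hsS, hsc, -, hins⟩ := drc_skel_prop hG hS hs
  refine drc_mem_pruned.2 ⟨h s hs, fun x hx => ?_⟩
  have h1 : (insert v s).filter (fun w => w.1 ≠ t) = s := by
    rw [Finset.filter_insert, if_neg (by simp [hv])]
    exact Finset.filter_true_of_mem fun w hw => hS w (hsS hw)
  rw [h1]
  exact hins x hx

private def drcCN (t : Fin k) (G : HyperGraph k (Fin k × Fin n))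
    (F : Finset (Finset (Fin k × Fin n))) : Finset (Fin n) :=
  Finset.univ.filter fun j => ∀ b ∈ F, insert ((t, j) : Fin k × Fin n) b ∈ G.edges

private lemma drc_card_mutualExt {t : Fin k} {G : HyperGraph k (Fin k × Fin n)}
    (hG : G.IsPartite Prod.fst) {X S : Finset (Fin k × Fin n)}
    (hS : ∀ v ∈ S, v.1 ≠ t) :
    (mutualExt (drcPruned t G X) t S).card =
      (drcCN t G (inducedSkel (drcPruned t G X) S)).card := by
  rw [drc_mutualExt_t hG hS]
  refine Finset.card_bij (fun v _ => v.2) ?_ ?_ ?_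
  · intro v hv
    simp only [Finset.mem_filter, Finset.mem_univ, true_and] at hv
    simp only [drcCN, Finset.mem_filter, Finset.mem_univ, true_and]
    intro b hb
    have hveq : ((t, v.2) : Fin k × Fin n) = v := by rw [← hv.1]
    rw [hveq]
    exact hv.2 b hb
  · intro v hv w hw hvw
    simp only [Finset.mem_filter, Finset.mem_univ, true_and] at hv hw
    obtain ⟨v1, v2⟩ := v; obtain ⟨w1, w2⟩ := w
    simp only at hvw
    simp only [Prod.mk.injEq]
    exact ⟨hv.1.trans hw.1.symm, hvw⟩
  · intro j hj
    simp only [drcCN, Finset.mem_filter, Finset.mem_univ, true_and] at hj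
    exact ⟨(t, j), Finset.mem_filter.2 ⟨Finset.mem_univ _, rfl, hj⟩, rfl⟩

end DRCAux
section DRCAux2

variable {k n : ℕ}

private lemma drc_sub_mutualExt {t r : Fin k} (hrt : r ≠ t) (hk : 3 ≤ k)
    {G : HyperGraph k (Fin k × Fin n)} (hG : G.IsPartite Prod.fst)
    {X S : Finset (Fin k × Fin n)} (hX : ∀ x ∈ X, x.1 = t) (hS : ∀ v ∈ S, v.1 ≠ r) :
    mutualExt G r (S ∪ X) ⊆ mutualExt (drcPruned t G X) r S := by
  intro v hv
  simp only [mutualExt, Finset.mem_filter, Finset.mem_univ, true_and] at hv ⊢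
  obtain ⟨hvr, hvext⟩ := hv
  refine ⟨hvr, fun s hs => ?_⟩
  rw [drc_mem_skel] at hs
  obtain ⟨hsS, hsc, e, heP, hse⟩ := hs
  have heG : e ∈ G.edges := (drc_mem_pruned.1 heP).1
  have hePx : ∀ x ∈ X, insert x (e.filter fun w => w.1 ≠ t) ∈ G.edges :=
    (drc_mem_pruned.1 heP).2
  have hsr : ∀ w ∈ s, w.1 ≠ r := fun w hw => hS w (hsS hw)
  have hsG : s ∈ inducedSkel G (S ∪ X) :=
    drc_mem_skel.2 ⟨hsS.trans Finset.subset_union_left, hsc, e, heG, hse⟩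
  have hvs : insert v s ∈ G.edges := hvext s hsG
  refine drc_mem_pruned.2 ⟨hvs, fun x hx => ?_⟩
  obtain ⟨wt, hwt1, hwte, hwtfil, -, -, -⟩ := drc_part_decomp hG heG t
  obtain ⟨vr, hvr1, hvre, -, -, -, -⟩ := drc_part_decomp hG heG r
  -- the t-vertex of e belongs to s
  have hwts : wt ∈ s := by
    by_contra hcon
    have hvrwt : vr ≠ wt := fun h => hrt (by rw [← hvr1, h, hwt1])
    have hsub : s ⊆ (e.erase wt).erase vr := by
      intro w hw
      refine Finset.mem_erase.2 ⟨?_, Finset.mem_erase.2 ⟨?_, hse hw⟩⟩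
      · rintro rfl; exact hsr _ hw hvr1
      · rintro rfl; exact hcon hw
    have hle := Finset.card_le_card hsub
    rw [Finset.card_erase_of_mem (Finset.mem_erase.2 ⟨hvrwt, hvre⟩),
      Finset.card_erase_of_mem hwte, G.card_eq e heG, hsc] at hle
    omega
  -- b = s minus its t-vertex
  set b : Finset (Fin k × Fin n) := s.filter fun w => w.1 ≠ t with hbdef
  have hbeq : b = s.erase wt := by
    ext w
    simp only [hbdef, Finset.mem_filter, Finset.mem_erase]
    constructor
    · rintro ⟨hw, hwt⟩
      exact ⟨fun h => hwt (h ▸ hwt1), hw⟩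
    · rintro ⟨hwne, hw⟩
      refine ⟨hw, fun hwp => ?_⟩
      have : w ∈ e.filter fun u => u.1 = t := Finset.mem_filter.2 ⟨hse hw, hwp⟩
      rw [hwtfil] at this
      exact hwne (Finset.mem_singleton.1 this)
  have hbcard : b.card = k - 2 := by
    rw [hbeq, Finset.card_erase_of_mem hwts, hsc]; omega
  have hxt : x.1 = t := hX x hx
  have hxb : x ∉ b := by
    intro hmem
    rw [hbdef] at hmem
    exact (Finset.mem_filter.1 hmem).2 hxt
  have hucard : (insert x b).card = k - 1 := by
    rw [Finset.card_insert_of_notMem hxb, hbcard]; omega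
  have huskel : insert x b ∈ inducedSkel G (S ∪ X) := by
    refine drc_mem_skel.2 ⟨?_, hucard, insert x (e.filter fun w => w.1 ≠ t), hePx x hx, ?_⟩
    · refine Finset.insert_subset (Finset.mem_union_right _ hx) ?_
      exact ((Finset.filter_subset _ s).trans hsS).trans Finset.subset_union_left
    · exact Finset.insert_subset_insert x (Finset.filter_subset_filter _ hse)
  have hvu : insert v (insert x b) ∈ G.edges := hvext _ huskel
  have hfil : (insert v s).filter (fun w => w.1 ≠ t) = insert v b := by
    rw [Finset.filter_insert, if_pos (show v.1 ≠ t by rw [hvr]; exact hrt)]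
  rw [hfil, Finset.insert_comm]
  exact hvu

private lemma drc_count_pi {m : ℕ} (A : Finset (Fin n)) :
    ((Finset.univ : Finset (Fin m → Fin n)).filter fun ω => ∀ i, ω i ∈ A).card
      = A.card ^ m := by
  have h : ((Finset.univ : Finset (Fin m → Fin n)).filter fun ω => ∀ i, ω i ∈ A)
      = Fintype.piFinset fun _ => A := by
    ext ω; simp [Fintype.mem_piFinset]
  rw [h, Fintype.card_piFinset]
  simp

private def drcX (t : Fin k) {m : ℕ} (ω : Fin m → Fin n) : Finset (Fin k × Fin n) :=
  Finset.univ.image fun i => ((t, ω i) : Fin k × Fin n)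

private lemma drc_mem_drcX {t : Fin k} {m : ℕ} {ω : Fin m → Fin n}
    {x : Fin k × Fin n} (hx : x ∈ drcX t ω) : x.1 = t := by
  simp only [drcX, Finset.mem_image] at hx
  obtain ⟨i, -, rfl⟩ := hx
  rfl

private def drcN (t : Fin k) (G : HyperGraph k (Fin k × Fin n))
    (b : Finset (Fin k × Fin n)) : Finset (Fin n) :=
  Finset.univ.filter fun j => insert ((t, j) : Fin k × Fin n) b ∈ G.edges

private lemma drc_sum_pruned (t : Fin k) (G : HyperGraph k (Fin k × Fin n)) (m : ℕ) :
    ∑ ω : Fin m → Fin n, ((drcPruned t G (drcX t ω)).edges).card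
      = ∑ e ∈ G.edges, (drcN t G (e.filter fun v => v.1 ≠ t)).card ^ m := by
  have h1 : ∀ ω : Fin m → Fin n, ((drcPruned t G (drcX t ω)).edges).card
      = ∑ e ∈ G.edges, if (∀ i, ω i ∈ drcN t G (e.filter fun v => v.1 ≠ t)) then 1 else 0 := by
    intro ω
    have h2 : (drcPruned t G (drcX t ω)).edges
        = G.edges.filter fun e => ∀ i, ω i ∈ drcN t G (e.filter fun v => v.1 ≠ t) := by
      refine Finset.filter_congr fun e _ => ?_
      simp [drcX, drcN]
    rw [h2, Finset.card_filter]
  calc ∑ ω : Fin m → Fin n, ((drcPruned t G (drcX t ω)).edges).card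
      = ∑ ω : Fin m → Fin n, ∑ e ∈ G.edges,
          if (∀ i, ω i ∈ drcN t G (e.filter fun v => v.1 ≠ t)) then 1 else 0 :=
        Finset.sum_congr rfl fun ω _ => h1 ω
    _ = ∑ e ∈ G.edges, ∑ ω : Fin m → Fin n,
          if (∀ i, ω i ∈ drcN t G (e.filter fun v => v.1 ≠ t)) then 1 else 0 :=
        Finset.sum_comm
    _ = ∑ e ∈ G.edges, (drcN t G (e.filter fun v => v.1 ≠ t)).card ^ m := by
        refine Finset.sum_congr rfl fun e _ => ?_
        rw [← Finset.card_filter, drc_count_pi]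

end DRCAux2
section DRCAux3

variable {k n : ℕ}

private lemma drc_fiber {t : Fin k} {G : HyperGraph k (Fin k × Fin n)}
    (hG : G.IsPartite Prod.fst) {b : Finset (Fin k × Fin n)}
    (hb : ∀ w ∈ b, w.1 ≠ t) :
    (G.edges.filter fun e => (e.filter fun v => v.1 ≠ t) = b)
      = (drcN t G b).image fun j => insert ((t, j) : Fin k × Fin n) b := by
  ext e
  simp only [Finset.mem_filter, Finset.mem_image, drcN, Finset.mem_univ, true_and]
  constructor
  · rintro ⟨he, rfl⟩
    obtain ⟨v, hv1, hve, -, -, hins, -⟩ := drc_part_decomp hG he t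
    have hveq : ((t, v.2) : Fin k × Fin n) = v := by rw [← hv1]
    refine ⟨v.2, ?_, ?_⟩
    · rw [hveq, ← hins]; exact he
    · rw [hveq]; exact hins.symm
  · rintro ⟨j, hj, rfl⟩
    refine ⟨hj, ?_⟩
    rw [Finset.filter_insert, if_neg (by simp), Finset.filter_true_of_mem hb]

private lemma drc_fiber_card {t : Fin k} {G : HyperGraph k (Fin k × Fin n)}
    (hG : G.IsPartite Prod.fst) {b : Finset (Fin k × Fin n)}
    (hb : ∀ w ∈ b, w.1 ≠ t) :
    (G.edges.filter fun e => (e.filter fun v => v.1 ≠ t) = b).card = (drcN t G b).card := by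
  rw [drc_fiber hG hb]
  refine Finset.card_image_of_injOn fun j₁ h₁ j₂ h₂ hins => ?_
  have hmem : ((t, j₁) : Fin k × Fin n) ∈ insert ((t, j₂) : Fin k × Fin n) b := by
    rw [← hins]; exact Finset.mem_insert_self _ _
  rcases Finset.mem_insert.1 hmem with h | h
  · simpa using congrArg Prod.snd h
  · exact absurd rfl (hb _ h)

private lemma drc_group {t : Fin k} {G : HyperGraph k (Fin k × Fin n)}
    (hG : G.IsPartite Prod.fst) (F : Finset (Fin k × Fin n) → ℕ) :
    ∑ e ∈ G.edges, F (e.filter fun v => v.1 ≠ t)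
      = ∑ b ∈ G.edges.image (fun e => e.filter fun v => v.1 ≠ t),
          (drcN t G b).card * F b := by
  have h := Finset.sum_comp (s := G.edges) (fun b => F b)
    (fun e : Finset (Fin k × Fin n) => e.filter fun v => v.1 ≠ t)
  rw [h]
  refine Finset.sum_congr rfl fun b hb => ?_
  have hbt : ∀ w ∈ b, w.1 ≠ t := by
    obtain ⟨e, -, rfl⟩ := Finset.mem_image.1 hb
    exact fun w hw => (Finset.mem_filter.1 hw).2
  rw [drc_fiber_card hG hbt, smul_eq_mul]

private lemma drc_sum_pow {t : Fin k} {G : HyperGraph k (Fin k × Fin n)}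
    (hG : G.IsPartite Prod.fst) (m : ℕ) :
    ∑ e ∈ G.edges, (drcN t G (e.filter fun v => v.1 ≠ t)).card ^ m
      = ∑ b ∈ G.edges.image (fun e => e.filter fun v => v.1 ≠ t),
          (drcN t G b).card ^ (m + 1) := by
  rw [drc_group hG (fun b => (drcN t G b).card ^ m)]
  exact Finset.sum_congr rfl fun b _ => (pow_succ' _ _).symm

private lemma drc_card_edges {t : Fin k} {G : HyperGraph k (Fin k × Fin n)}
    (hG : G.IsPartite Prod.fst) :
    G.edges.card = ∑ b ∈ G.edges.image (fun e => e.filter fun v => v.1 ≠ t),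
      (drcN t G b).card := by
  have h := drc_group (t := t) hG (fun _ => 1)
  simpa using h

private lemma drc_edges_le (G : HyperGraph k (Fin k × Fin n)) :
    G.edges.card ≤ (k * n) ^ k := by
  have hsub : G.edges ⊆ Finset.univ.powersetCard k :=
    fun e he => Finset.mem_powersetCard.2 ⟨Finset.subset_univ e, G.card_eq e he⟩
  calc G.edges.card ≤ (Finset.univ.powersetCard k).card := Finset.card_le_card hsub
    _ = (Fintype.card (Fin k × Fin n)).choose k := by
        rw [Finset.card_powersetCard, Finset.card_univ]
    _ ≤ (k * n) ^ k := by
        simpa [Fintype.card_prod] using Nat.choose_le_pow (k * n) k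

private lemma drc_bodies_le {t : Fin k} {G : HyperGraph k (Fin k × Fin n)}
    (hG : G.IsPartite Prod.fst) :
    (G.edges.image (fun e => e.filter fun v => v.1 ≠ t)).card ≤ (k * n) ^ (k - 1) := by
  have hsub : G.edges.image (fun e => e.filter fun v => v.1 ≠ t)
      ⊆ Finset.univ.powersetCard (k - 1) := by
    intro b hb
    obtain ⟨e, he, rfl⟩ := Finset.mem_image.1 hb
    obtain ⟨-, -, -, -, -, -, hc⟩ := drc_part_decomp hG he t
    exact Finset.mem_powersetCard.2 ⟨Finset.subset_univ _, hc⟩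
  calc _ ≤ (Finset.univ.powersetCard (k - 1)).card := Finset.card_le_card hsub
    _ = (Fintype.card (Fin k × Fin n)).choose (k - 1) := by
        rw [Finset.card_powersetCard, Finset.card_univ]
    _ ≤ (k * n) ^ (k - 1) := by
        simpa [Fintype.card_prod] using Nat.choose_le_pow (k * n) (k - 1)

private lemma drc_small_sets (hkn : 1 ≤ k * n) (dd : ℕ) :
    ((Finset.univ : Finset (Finset (Fin k × Fin n))).filter fun S => S.card ≤ dd).card
      ≤ (dd + 1) * (k * n) ^ dd := by
  have hsub : ((Finset.univ : Finset (Finset (Fin k × Fin n))).filter fun S => S.card ≤ dd)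
      ⊆ (Finset.range (dd + 1)).biUnion fun j => Finset.univ.powersetCard j := by
    intro S hS
    simp only [Finset.mem_filter] at hS
    exact Finset.mem_biUnion.2 ⟨S.card, Finset.mem_range.2 (by omega),
      Finset.mem_powersetCard.2 ⟨Finset.subset_univ S, rfl⟩⟩
  calc _ ≤ ((Finset.range (dd + 1)).biUnion fun j => Finset.univ.powersetCard j).card :=
        Finset.card_le_card hsub
    _ ≤ ∑ j ∈ Finset.range (dd + 1),
          ((Finset.univ : Finset (Fin k × Fin n)).powersetCard j).card :=
        Finset.card_biUnion_le
    _ ≤ ∑ _j ∈ Finset.range (dd + 1), (k * n) ^ dd := by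
        refine Finset.sum_le_sum fun j hj => ?_
        rw [Finset.card_powersetCard, Finset.card_univ, Fintype.card_prod,
          Fintype.card_fin, Fintype.card_fin]
        calc (k * n).choose j ≤ (k * n) ^ j := Nat.choose_le_pow _ _
          _ ≤ (k * n) ^ dd := Nat.pow_le_pow_right hkn (by
              have := Finset.mem_range.1 hj; omega)
    _ = (dd + 1) * (k * n) ^ dd := by
        rw [Finset.sum_const, Finset.card_range, smul_eq_mul]

end DRCAux3
section DRCAux4

variable {k n : ℕ}

private lemma drc_bad_bound {m dd : ℕ} (hkn : 1 ≤ k * n) {t : Fin k}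
    {G : HyperGraph k (Fin k × Fin n)} (hG : G.IsPartite Prod.fst) {a : ℝ} (ha : 0 ≤ a)
    (B : Finset (Fin m → Fin n))
    (hB : ∀ ω ∈ B, ∃ S : Finset (Fin k × Fin n), (∀ v ∈ S, v.1 ≠ t) ∧ S.card ≤ dd ∧
        ((mutualExt (drcPruned t G (drcX t ω)) t S).card : ℝ) < a) :
    (B.card : ℝ) ≤ (((dd + 1) * (k * n) ^ dd * 2 ^ (dd ^ (k - 1)) : ℕ) : ℝ) * a ^ m := by
  classical
  set Pairs : Finset ((_ : Finset (Fin k × Fin n)) × Finset (Finset (Fin k × Fin n))) :=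
    ((Finset.univ : Finset (Finset (Fin k × Fin n))).filter fun S => S.card ≤ dd).sigma
      (fun S => (S.powersetCard (k - 1)).powerset) with hPairs
  set poor : Finset ((_ : Finset (Fin k × Fin n)) × Finset (Finset (Fin k × Fin n))) :=
    Pairs.filter fun p => ((drcCN t G p.2).card : ℝ) < a with hpoor
  have hsub : B ⊆ poor.biUnion fun p =>
      Finset.univ.filter fun ω : Fin m → Fin n => ∀ i, ω i ∈ drcCN t G p.2 := by
    intro ω hω
    obtain ⟨S, hS, hScard, hbad⟩ := hB ω hω
    refine Finset.mem_biUnion.2 ⟨⟨S, inducedSkel (drcPruned t G (drcX t ω)) S⟩, ?_, ?_⟩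
    · refine Finset.mem_filter.2 ⟨Finset.mem_sigma.2 ⟨Finset.mem_filter.2
        ⟨Finset.mem_univ _, hScard⟩, Finset.mem_powerset.2 (Finset.filter_subset _ _)⟩, ?_⟩
      rw [← drc_card_mutualExt hG hS]
      exact hbad
    · refine Finset.mem_filter.2 ⟨Finset.mem_univ _, fun i => ?_⟩
      refine Finset.mem_filter.2 ⟨Finset.mem_univ _, fun b hb => ?_⟩
      exact (drc_skel_prop hG hS hb).2.2.2 ((t, ω i))
        (Finset.mem_image.2 ⟨i, Finset.mem_univ _, rfl⟩)
  have hcard1 : B.card ≤ ∑ p ∈ poor, (drcCN t G p.2).card ^ m := by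
    calc B.card ≤ (poor.biUnion fun p =>
          Finset.univ.filter fun ω : Fin m → Fin n => ∀ i, ω i ∈ drcCN t G p.2).card :=
        Finset.card_le_card hsub
      _ ≤ ∑ p ∈ poor, (Finset.univ.filter
            fun ω : Fin m → Fin n => ∀ i, ω i ∈ drcCN t G p.2).card :=
        Finset.card_biUnion_le
      _ = ∑ p ∈ poor, (drcCN t G p.2).card ^ m :=
        Finset.sum_congr rfl fun p _ => drc_count_pi _
  have hcard2 : (B.card : ℝ) ≤ ∑ p ∈ poor, a ^ m := by
    calc (B.card : ℝ) ≤ ((∑ p ∈ poor, (drcCN t G p.2).card ^ m : ℕ) : ℝ) := by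
          exact_mod_cast hcard1
      _ = ∑ p ∈ poor, ((drcCN t G p.2).card : ℝ) ^ m := by push_cast; rfl
      _ ≤ ∑ p ∈ poor, a ^ m := by
          refine Finset.sum_le_sum fun p hp => ?_
          have hlt : ((drcCN t G p.2).card : ℝ) < a := (Finset.mem_filter.1 hp).2
          exact pow_le_pow_left₀ (by positivity) hlt.le m
  have hPairscard : Pairs.card ≤ (dd + 1) * (k * n) ^ dd * 2 ^ (dd ^ (k - 1)) := by
    rw [hPairs, Finset.card_sigma]
    calc ∑ S ∈ (Finset.univ : Finset (Finset (Fin k × Fin n))).filter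
            (fun S => S.card ≤ dd), ((S.powersetCard (k - 1)).powerset).card
        ≤ ∑ S ∈ (Finset.univ : Finset (Finset (Fin k × Fin n))).filter
            (fun S => S.card ≤ dd), 2 ^ (dd ^ (k - 1)) := by
          refine Finset.sum_le_sum fun S hS => ?_
          rw [Finset.card_powerset, Finset.card_powersetCard]
          refine Nat.pow_le_pow_right (by norm_num) ?_
          have hSc : S.card ≤ dd := (Finset.mem_filter.1 hS).2
          calc S.card.choose (k - 1) ≤ S.card ^ (k - 1) := Nat.choose_le_pow _ _
            _ ≤ dd ^ (k - 1) := Nat.pow_le_pow_left hSc _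
      _ = ((Finset.univ : Finset (Finset (Fin k × Fin n))).filter
            (fun S => S.card ≤ dd)).card * 2 ^ (dd ^ (k - 1)) := by
          rw [Finset.sum_const, smul_eq_mul]
      _ ≤ (dd + 1) * (k * n) ^ dd * 2 ^ (dd ^ (k - 1)) :=
          Nat.mul_le_mul_right _ (drc_small_sets hkn dd)
  calc (B.card : ℝ) ≤ ∑ p ∈ poor, a ^ m := hcard2
    _ = (poor.card : ℝ) * a ^ m := by rw [Finset.sum_const, nsmul_eq_mul]
    _ ≤ (((dd + 1) * (k * n) ^ dd * 2 ^ (dd ^ (k - 1)) : ℕ) : ℝ) * a ^ m := by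
        refine mul_le_mul_of_nonneg_right ?_ (by positivity)
        have h1 : poor.card ≤ Pairs.card := Finset.card_le_card (Finset.filter_subset _ _)
        exact_mod_cast h1.trans hPairscard

end DRCAux4

/-- **Corollary (clean dependent random choice step).** Let `d ≥ 4`, `k ≥ 3`, `t ∈ [k]`,
`ε ∈ (0, 1/(3d)]`. For all sufficiently large `n`: if `G` is `k`-partite `k`-uniform with
`n` vertices per part, `(n^(1/3), 3d)`-vertex-extending to each part before `t`, and
`e(G) ≥ n^(k−ε)`, then there are a subhypergraph `G'` on the same vertex set and a
nonempty `X ⊆ V_t` such that `G'` is `(n^(1/3), d)`-vertex-extending to every part up to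
`t`, `e(G') ≥ n^(k−3dε)`, and the edges of `G'` are exactly the edges `e` of `G` with
`(e \ V_t) ∪ {x} ∈ E(G)` for every `x ∈ X`. -/
theorem dependent_random_choice_corollary (d k : ℕ) (t : Fin k) (hd : 4 ≤ d) (hk : 3 ≤ k)
    (ε : ℝ) (hε0 : 0 < ε) (hε : ε ≤ 1 / (3 * (d : ℝ))) :
    ∃ n0 : ℕ, ∀ n : ℕ, n0 ≤ n →
      ∀ G : HyperGraph k (Fin k × Fin n), G.IsPartite Prod.fst →
        (∀ r : Fin k, r < t → VertexExtending G ((n : ℝ) ^ ((1 : ℝ) / 3)) (3 * d) r) →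
        (n : ℝ) ^ ((k : ℝ) - ε) ≤ (G.edges.card : ℝ) →
        ∃ (G' : HyperGraph k (Fin k × Fin n)) (X : Finset (Fin k × Fin n)),
          G'.edges ⊆ G.edges ∧
          X.Nonempty ∧ (∀ x ∈ X, x.1 = t) ∧
          (∀ r : Fin k, r ≤ t → VertexExtending G' ((n : ℝ) ^ ((1 : ℝ) / 3)) d r) ∧
          (n : ℝ) ^ ((k : ℝ) - 3 * (d : ℝ) * ε) ≤ (G'.edges.card : ℝ) ∧
          G'.edges = G.edges.filter fun e =>
            ∀ x ∈ X, insert x (e.filter fun v => v.1 ≠ t) ∈ G.edges := by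
  classical
  have hd4 : (4 : ℝ) ≤ (d : ℝ) := by exact_mod_cast hd
  have hk3 : (3 : ℝ) ≤ (k : ℝ) := by exact_mod_cast hk
  have hk1 : 1 ≤ k := by omega
  obtain ⟨m, hm⟩ : ∃ m : ℕ, m = 2 * d := ⟨_, rfl⟩
  have hmr : ((m : ℕ) : ℝ) = 2 * (d : ℝ) := by rw [hm]; push_cast; ring
  have h3dε : 3 * (d : ℝ) * ε ≤ 1 := by
    have hdpos : (0 : ℝ) < 3 * (d : ℝ) := by linarith
    have h1 := mul_le_mul_of_nonneg_left hε hdpos.le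
    rwa [mul_one_div, div_self hdpos.ne'] at h1
  set c₁ : ℝ := (k : ℝ) ^ ((k - 1) * m) with hc₁
  set c₂ : ℝ := (k : ℝ) ^ k with hc₂
  set c₃ : ℝ := ((d : ℝ) + 1) * (k : ℝ) ^ d * (2 : ℝ) ^ (d ^ (k - 1)) with hc₃
  have hkpos : (0 : ℝ) < (k : ℝ) := by linarith
  have hc₁pos : (0 : ℝ) < c₁ := by rw [hc₁]; positivity
  have hc₂pos : (0 : ℝ) < c₂ := by rw [hc₂]; positivity
  have hc₃pos : (0 : ℝ) < c₃ := by rw [hc₃]; positivity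
  have hα : (0 : ℝ) < ((d : ℝ) - 1) * ε := by nlinarith
  obtain ⟨n1, hn1⟩ := Filter.eventually_atTop.1
    (((tendsto_rpow_atTop hα).comp
      (tendsto_natCast_atTop_atTop (R := ℝ))).eventually_ge_atTop (2 * c₁))
  obtain ⟨n2, hn2⟩ := Filter.eventually_atTop.1
    (((tendsto_rpow_atTop (by norm_num : (0 : ℝ) < 1 / 3)).comp
      (tendsto_natCast_atTop_atTop (R := ℝ))).eventually_ge_atTop (c₂ * c₃ + 1))
  refine ⟨max (max n1 n2) 2, fun n hn G hG hext hE => ?_⟩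
  have hn2' : 2 ≤ n := le_trans (le_max_right _ _) hn
  have hnn1 : (1 : ℝ) ≤ (n : ℝ) := by exact_mod_cast (by omega : 1 ≤ n)
  have hnn0 : (0 : ℝ) < (n : ℝ) := by linarith
  have hA1 : 2 * c₁ ≤ (n : ℝ) ^ (((d : ℝ) - 1) * ε) := by
    have := hn1 n (le_trans (le_trans (le_max_left _ _) (le_max_left _ _)) hn)
    simpa using this
  have hA2 : c₂ * c₃ + 1 ≤ (n : ℝ) ^ ((1 : ℝ) / 3) := by
    have := hn2 n (le_trans (le_trans (le_max_right _ _) (le_max_left _ _)) hn)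
    simpa using this
  have hkn1 : 1 ≤ k * n := by
    have := Nat.mul_le_mul hk hn2'; omega
  -- edges are nonempty
  have hrpos : (0 : ℝ) < (n : ℝ) ^ ((k : ℝ) - ε) := Real.rpow_pos_of_pos hnn0 _
  have hEpos : 0 < G.edges.card := by
    by_contra h
    push_neg at h
    have h0 : G.edges.card = 0 := by omega
    rw [h0] at hE
    norm_num at hE
    linarith
  -- bodies
  set Bodies := G.edges.image (fun e => e.filter fun v => v.1 ≠ t) with hBodies
  have hBne : Bodies.Nonempty := (Finset.card_pos.1 hEpos).image _
  have hBpos : (0 : ℝ) < (Bodies.card : ℝ) := by exact_mod_cast Finset.card_pos.2 hBne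
  have hBle : (Bodies.card : ℝ) ≤ ((((k * n) ^ (k - 1) : ℕ)) : ℝ) := by
    exact_mod_cast drc_bodies_le hG
  set T0 : ℝ := ∑ b ∈ Bodies, ((drcN t G b).card : ℝ) ^ (m + 1) with hT0def
  have hEsum : ∑ b ∈ Bodies, ((drcN t G b).card : ℝ) = (G.edges.card : ℝ) := by
    rw [drc_card_edges (t := t) hG]
    push_cast
    rfl
  have hjen : ((n : ℝ) ^ ((k : ℝ) - ε)) ^ (m + 1) / ((((k * n) ^ (k - 1) : ℕ)) : ℝ) ^ m
      ≤ T0 := by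
    have h1 := pow_sum_div_card_le_sum_pow (s := Bodies)
      (f := fun b => ((drcN t G b).card : ℝ)) (fun b _ => by positivity) m
    rw [hEsum] at h1
    refine le_trans ?_ h1
    refine div_le_div₀ (by positivity) ?_ (by positivity) ?_
    · exact pow_le_pow_left₀ (Real.rpow_nonneg hnn0.le _) hE _
    · exact pow_le_pow_left₀ (by positivity) hBle m
  have hsumω : ∑ ω : Fin m → Fin n, (((drcPruned t G (drcX t ω)).edges).card : ℝ) = T0 := by
    have h3 : ∑ ω : Fin m → Fin n, ((drcPruned t G (drcX t ω)).edges).card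
        = ∑ b ∈ Bodies, (drcN t G b).card ^ (m + 1) :=
      (drc_sum_pruned t G m).trans (drc_sum_pow (t := t) hG m)
    rw [hT0def]
    exact_mod_cast h3
  set θ : ℝ := (n : ℝ) ^ ((k : ℝ) - 3 * (d : ℝ) * ε) with hθ
  have hθ0 : 0 ≤ θ := Real.rpow_nonneg hnn0.le _
  set M : ℝ := ((((k * n) ^ k : ℕ)) : ℝ) with hM
  have hM0 : (0 : ℝ) < M := by
    rw [hM]
    exact_mod_cast Nat.one_le_pow k (k * n) (by omega)
  set GoodA := (Finset.univ : Finset (Fin m → Fin n)).filter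
    (fun ω => θ ≤ (((drcPruned t G (drcX t ω)).edges).card : ℝ)) with hGoodA
  set BadSet := (Finset.univ : Finset (Fin m → Fin n)).filter
    (fun ω => ∃ S : Finset (Fin k × Fin n), (∀ v ∈ S, v.1 ≠ t) ∧ S.card ≤ d ∧
      ((mutualExt (drcPruned t G (drcX t ω)) t S).card : ℝ) < (n : ℝ) ^ ((1 : ℝ) / 3))
    with hBadSet
  have hΩcard : ((Finset.univ : Finset (Fin m → Fin n)).card : ℝ) = (((n ^ m : ℕ)) : ℝ) := by
    rw [Finset.card_univ, Fintype.card_fun, Fintype.card_fin, Fintype.card_fin]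
  have hsplit : T0 ≤ (GoodA.card : ℝ) * M + (((n ^ m : ℕ)) : ℝ) * θ := by
    rw [← hsumω, ← Finset.sum_filter_add_sum_filter_not Finset.univ
      (fun ω => θ ≤ (((drcPruned t G (drcX t ω)).edges).card : ℝ))
      (fun ω => (((drcPruned t G (drcX t ω)).edges).card : ℝ))]
    refine add_le_add ?_ ?_
    · refine le_trans (Finset.sum_le_card_nsmul _ _ M ?_) ?_
      · intro ω _
        rw [hM]
        have h1 : ((drcPruned t G (drcX t ω)).edges).card ≤ (k * n) ^ k :=
          le_trans (Finset.card_le_card (Finset.filter_subset _ _)) (drc_edges_le G)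
        exact_mod_cast h1
      · rw [nsmul_eq_mul]
    · refine le_trans (Finset.sum_le_card_nsmul _ _ θ ?_) ?_
      · intro ω hω
        exact (not_le.1 (Finset.mem_filter.1 hω).2).le
      · rw [nsmul_eq_mul]
        refine mul_le_mul_of_nonneg_right ?_ hθ0
        rw [← hΩcard]
        exact_mod_cast Finset.card_filter_le _ _
  -- numeric step 1 : T0 is at least twice n^m * θ
  have e1 : ((n : ℝ) ^ ((k : ℝ) - ε)) ^ (m + 1)
      = (n : ℝ) ^ (((k : ℝ) - ε) * (((m : ℕ) : ℝ) + 1)) := by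
    rw [← Real.rpow_natCast ((n : ℝ) ^ ((k : ℝ) - ε)) (m + 1), ← Real.rpow_mul hnn0.le]
    push_cast
    ring_nf
  have e2 : ((((k * n) ^ (k - 1) : ℕ)) : ℝ) ^ m
      = c₁ * (n : ℝ) ^ ((((k - 1) * m : ℕ)) : ℝ) := by
    rw [Real.rpow_natCast, hc₁]
    push_cast
    rw [pow_mul, pow_mul, ← mul_pow, mul_pow (k : ℝ) (n : ℝ) (k - 1)]
  have e3 : (((n ^ m : ℕ)) : ℝ) * θ = (n : ℝ) ^ (((m : ℕ) : ℝ) + ((k : ℝ) - 3 * (d : ℝ) * ε)) := by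
    rw [Real.rpow_add hnn0, hθ, Real.rpow_natCast]
    push_cast
    ring
  have hexp1 : ((k : ℝ) - ε) * (((m : ℕ) : ℝ) + 1) - ((((k - 1) * m : ℕ)) : ℝ)
      = ((d : ℝ) - 1) * ε + (((m : ℕ) : ℝ) + ((k : ℝ) - 3 * (d : ℝ) * ε)) := by
    push_cast [Nat.cast_sub hk1]
    rw [hmr]
    ring
  have key1 : 2 * ((((n ^ m : ℕ)) : ℝ) * θ) ≤ T0 := by
    refine le_trans ?_ hjen
    rw [e1, e2, e3]
    rw [div_mul_eq_div_div_swap, ← Real.rpow_sub hnn0, hexp1, le_div_iff₀ hc₁pos]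
    calc 2 * (n : ℝ) ^ (((m : ℕ) : ℝ) + ((k : ℝ) - 3 * (d : ℝ) * ε)) * c₁
        = (2 * c₁) * (n : ℝ) ^ (((m : ℕ) : ℝ) + ((k : ℝ) - 3 * (d : ℝ) * ε)) := by ring
      _ ≤ (n : ℝ) ^ (((d : ℝ) - 1) * ε)
            * (n : ℝ) ^ (((m : ℕ) : ℝ) + ((k : ℝ) - 3 * (d : ℝ) * ε)) :=
        mul_le_mul_of_nonneg_right hA1 (Real.rpow_nonneg hnn0.le _)
      _ = (n : ℝ) ^ (((d : ℝ) - 1) * ε + (((m : ℕ) : ℝ) + ((k : ℝ) - 3 * (d : ℝ) * ε))) :=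
        (Real.rpow_add hnn0 _ _).symm
  have hgoodge : (((n ^ m : ℕ)) : ℝ) * θ / M ≤ (GoodA.card : ℝ) := by
    rw [div_le_iff₀ hM0]
    linarith [hsplit, key1]
  -- bad set bound
  have hbadle : (BadSet.card : ℝ)
      ≤ (((d + 1) * (k * n) ^ d * 2 ^ (d ^ (k - 1)) : ℕ) : ℝ) * ((n : ℝ) ^ ((1 : ℝ) / 3)) ^ m := by
    refine drc_bad_bound (t := t) hkn1 hG (Real.rpow_nonneg hnn0.le _) BadSet ?_
    intro ω hω
    exact (Finset.mem_filter.1 hω).2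
  -- numeric step 2
  have e4 : (((d + 1) * (k * n) ^ d * 2 ^ (d ^ (k - 1)) : ℕ) : ℝ) * ((n : ℝ) ^ ((1 : ℝ) / 3)) ^ m
      = c₃ * (n : ℝ) ^ (((d : ℕ) : ℝ) + ((m : ℕ) : ℝ) / 3) := by
    rw [← Real.rpow_natCast ((n : ℝ) ^ ((1 : ℝ) / 3)) m, ← Real.rpow_mul hnn0.le,
      Real.rpow_add hnn0, Real.rpow_natCast]
    push_cast
    rw [mul_pow, hc₃]
    ring
  have e5 : (((n ^ m : ℕ)) : ℝ) * θ / M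
      = (n : ℝ) ^ ((((m : ℕ) : ℝ) + ((k : ℝ) - 3 * (d : ℝ) * ε)) - ((k : ℕ) : ℝ)) / c₂ := by
    have hMeq : M = c₂ * (n : ℝ) ^ (((k : ℕ)) : ℝ) := by
      rw [hM, hc₂, Real.rpow_natCast]
      push_cast
      rw [mul_pow]
    rw [e3, hMeq, Real.rpow_sub hnn0, div_mul_eq_div_div_swap]
  have hexp2 : (((m : ℕ) : ℝ) + ((k : ℝ) - 3 * (d : ℝ) * ε)) - ((k : ℕ) : ℝ)
      = ((d : ℝ) / 3 - 3 * (d : ℝ) * ε) + ((((d : ℕ) : ℝ)) + ((m : ℕ) : ℝ) / 3) := by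
    rw [hmr]
    push_cast
    ring
  have hQ13 : (1 : ℝ) / 3 ≤ (d : ℝ) / 3 - 3 * (d : ℝ) * ε := by linarith
  have key2 : c₃ * (n : ℝ) ^ (((d : ℕ) : ℝ) + ((m : ℕ) : ℝ) / 3)
      < (n : ℝ) ^ ((((m : ℕ) : ℝ) + ((k : ℝ) - 3 * (d : ℝ) * ε)) - ((k : ℕ) : ℝ)) / c₂ := by
    rw [hexp2, lt_div_iff₀ hc₂pos]
    have h6 : c₂ * c₃ + 1 ≤ (n : ℝ) ^ ((d : ℝ) / 3 - 3 * (d : ℝ) * ε) :=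
      le_trans hA2 (Real.rpow_le_rpow_of_exponent_le hnn1 hQ13)
    have h7 : (0 : ℝ) < (n : ℝ) ^ (((d : ℕ) : ℝ) + ((m : ℕ) : ℝ) / 3) :=
      Real.rpow_pos_of_pos hnn0 _
    calc c₃ * (n : ℝ) ^ (((d : ℕ) : ℝ) + ((m : ℕ) : ℝ) / 3) * c₂
        = (c₂ * c₃) * (n : ℝ) ^ (((d : ℕ) : ℝ) + ((m : ℕ) : ℝ) / 3) := by ring
      _ < (c₂ * c₃ + 1) * (n : ℝ) ^ (((d : ℕ) : ℝ) + ((m : ℕ) : ℝ) / 3) :=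
          mul_lt_mul_of_pos_right (by linarith) h7
      _ ≤ (n : ℝ) ^ ((d : ℝ) / 3 - 3 * (d : ℝ) * ε)
            * (n : ℝ) ^ (((d : ℕ) : ℝ) + ((m : ℕ) : ℝ) / 3) :=
          mul_le_mul_of_nonneg_right h6 h7.le
      _ = (n : ℝ) ^ (((d : ℝ) / 3 - 3 * (d : ℝ) * ε) + ((((d : ℕ) : ℝ)) + ((m : ℕ) : ℝ) / 3)) :=
          (Real.rpow_add hnn0 _ _).symm
  have hlt : BadSet.card < GoodA.card := by
    have hchain : (BadSet.card : ℝ) < (GoodA.card : ℝ) := by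
      calc (BadSet.card : ℝ)
          ≤ (((d + 1) * (k * n) ^ d * 2 ^ (d ^ (k - 1)) : ℕ) : ℝ)
              * ((n : ℝ) ^ ((1 : ℝ) / 3)) ^ m := hbadle
        _ = c₃ * (n : ℝ) ^ (((d : ℕ) : ℝ) + ((m : ℕ) : ℝ) / 3) := e4
        _ < (n : ℝ) ^ ((((m : ℕ) : ℝ) + ((k : ℝ) - 3 * (d : ℝ) * ε)) - ((k : ℕ) : ℝ)) / c₂ :=
            key2
        _ = (((n ^ m : ℕ)) : ℝ) * θ / M := e5.symm
        _ ≤ (GoodA.card : ℝ) := hgoodge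
    exact_mod_cast hchain
  obtain ⟨ω, hωG, hωB⟩ := Finset.not_subset.1
    (fun hsub => absurd (Finset.card_le_card hsub) (not_le.2 hlt))
  have hωGood : θ ≤ (((drcPruned t G (drcX t ω)).edges).card : ℝ) :=
    (Finset.mem_filter.1 hωG).2
  have hωnotbad : ∀ S : Finset (Fin k × Fin n), (∀ v ∈ S, v.1 ≠ t) → S.card ≤ d →
      (n : ℝ) ^ ((1 : ℝ) / 3) ≤ ((mutualExt (drcPruned t G (drcX t ω)) t S).card : ℝ) := by
    intro S hS hScard
    by_contra hcon
    push_neg at hcon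
    exact hωB (Finset.mem_filter.2 ⟨Finset.mem_univ _, S, hS, hScard, hcon⟩)
  have hXfst : ∀ x ∈ drcX t ω, x.1 = t := fun x hx => drc_mem_drcX hx
  have hXcard : (drcX t ω).card ≤ m :=
    le_trans Finset.card_image_le (by rw [Finset.card_univ, Fintype.card_fin])
  have hm0 : 0 < m := by omega
  refine ⟨drcPruned t G (drcX t ω), drcX t ω, Finset.filter_subset _ _,
    ⟨(t, ω ⟨0, hm0⟩), Finset.mem_image.2 ⟨⟨0, hm0⟩, Finset.mem_univ _, rfl⟩⟩,
    hXfst, ?_, hωGood, rfl⟩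
  intro r hr S hSav hScard
  rcases lt_or_eq_of_le hr with hrlt | hreq
  · have hne : r ≠ t := ne_of_lt hrlt
    have hav : ∀ v ∈ S ∪ drcX t ω, v.1 ≠ r := by
      intro v hv
      rcases Finset.mem_union.1 hv with h | h
      · exact hSav v h
      · rw [drc_mem_drcX h]
        exact (ne_of_lt hrlt).symm
    have hcard : (S ∪ drcX t ω).card ≤ 3 * d := by
      have := Finset.card_union_le S (drcX t ω)
      omega
    refine le_trans (hext r hrlt (S ∪ drcX t ω) hav hcard) ?_
    exact_mod_cast Finset.card_le_card (drc_sub_mutualExt hne hk hG hXfst hSav)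
  · subst hreq
    exact hωnotbad S hSav hScard
end

section
/- For all integers d, k ≥ 2, the complete k-partite k-uniform hypergraph K^(k)_{d,…,d} (with d vertices in each of its k parts and all d^k transversal k-sets as edges) satisfies ex(n, K^(k)_{d,…,d}) ≥ a_k · n^{k − k/d^{k−1}} for some constant a_k > 0 depending only on k and all sufficiently large n, and its skeletal degeneracy satisfies d_1(K^(k)_{d,…,d}) = (k−1)d. -/
open Finset

/-- The complete `k`-partite `k`-uniform hypergraph with `d` vertices in each part:
the edges are all transversals. -/
def completePartite (k d : ℕ) : HyperGraph k (Fin k × Fin d) where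
  edges := Finset.univ.image fun f : Fin k → Fin d => Finset.univ.image fun i => (i, f i)
  card_eq := by
    intro e he
    simp only [Finset.mem_image] at he
    obtain ⟨f, -, rfl⟩ := he
    rw [Finset.card_image_of_injective _ fun a b hab => by
      simpa using congrArg Prod.fst hab]
    simp

/-- The bipartite hedgehog `H_d^(k)`: each edge `(i,j)` of `K_{d,d}` is extended to a
`k`-edge by `k-2` private new vertices. -/
def hedgehog (k d : ℕ) (hk : 2 ≤ k) :
    HyperGraph k (Fin d ⊕ Fin d ⊕ (Fin (k - 2) × Fin d × Fin d)) where
  edges := Finset.univ.image fun p : Fin d × Fin d =>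
    {Sum.inl p.1, Sum.inr (Sum.inl p.2)} ∪
      Finset.univ.image fun m : Fin (k - 2) => Sum.inr (Sum.inr (m, p.1, p.2))
  card_eq := by
    intro e he
    simp only [Finset.mem_image] at he
    obtain ⟨p, -, rfl⟩ := he
    have hdisj : Disjoint
        ({Sum.inl p.1, Sum.inr (Sum.inl p.2)} :
          Finset (Fin d ⊕ Fin d ⊕ (Fin (k - 2) × Fin d × Fin d)))
        (Finset.univ.image fun m : Fin (k - 2) => Sum.inr (Sum.inr (m, p.1, p.2))) := by
      simp [Finset.disjoint_left]
    rw [Finset.card_union_of_disjoint hdisj,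
      Finset.card_image_of_injective _ fun a b hab => by simpa using hab]
    simp only [Finset.card_univ, Fintype.card_fin]
    rw [Finset.card_insert_of_notMem (by simp), Finset.card_singleton]
    omega
section Prob

variable {X : Type} [DecidableEq X]

lemma sum_pq (p q : ℝ) (s : Finset X) :
    ∑ G ∈ s.powerset, p ^ G.card * q ^ (s \ G).card = (p + q) ^ s.card := by
  have h := Finset.prod_add (fun _ : X => p) (fun _ : X => q) s
  simp only [Finset.prod_const] at h
  rw [← h]

lemma sum_pq_filter (p q : ℝ) {s T : Finset X} (hT : T ⊆ s) :
    ∑ G ∈ s.powerset.filter (fun G => T ⊆ G), p ^ G.card * q ^ (s \ G).card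
      = p ^ T.card * (p + q) ^ (s \ T).card := by
  rw [← sum_pq p q (s \ T), Finset.mul_sum]
  refine Finset.sum_nbij' (fun G => G \ T) (fun H => H ∪ T) ?_ ?_ ?_ ?_ ?_
  · intro G hG
    simp only [Finset.mem_filter, Finset.mem_powerset] at hG
    exact Finset.mem_powerset.2 (Finset.sdiff_subset_sdiff hG.1 le_rfl)
  · intro H hH
    simp only [Finset.mem_powerset] at hH
    refine Finset.mem_filter.2 ⟨Finset.mem_powerset.2 ?_, Finset.subset_union_right⟩
    exact Finset.union_subset (hH.trans (Finset.sdiff_subset)) hT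
  · intro G hG
    simp only [Finset.mem_filter, Finset.mem_powerset] at hG
    show G \ T ∪ T = G
    rw [Finset.sdiff_union_of_subset hG.2]
  · intro H hH
    simp only [Finset.mem_powerset] at hH
    show (H ∪ T) \ T = H
    refine Finset.union_sdiff_cancel_right ?_
    exact Finset.disjoint_left.2 fun x hx hxT => (Finset.mem_sdiff.1 (hH hx)).2 hxT
  · intro G hG
    simp only [Finset.mem_filter, Finset.mem_powerset] at hG
    obtain ⟨hGs, hTG⟩ := hG
    have hcard : G.card = T.card + (G \ T).card := by
      have := Finset.card_sdiff_add_card_eq_card hTG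
      omega
    have hds : (s \ T) \ (G \ T) = s \ G := by
      ext x
      have hx : x ∈ T → x ∈ G := fun h => hTG h
      simp only [Finset.mem_sdiff]
      tauto
    rw [hcard, hds, pow_add]
    ring

lemma sum_pq_one {p q : ℝ} (hpq : p + q = 1) (s : Finset X) :
    ∑ G ∈ s.powerset, p ^ G.card * q ^ (s \ G).card = 1 := by
  rw [sum_pq, hpq, one_pow]

lemma sum_pq_filter_one {p q : ℝ} (hpq : p + q = 1) {s T : Finset X} (hT : T ⊆ s) :
    ∑ G ∈ s.powerset.filter (fun G => T ⊆ G), p ^ G.card * q ^ (s \ G).card = p ^ T.card := by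
  rw [sum_pq_filter p q hT, hpq, one_pow, mul_one]

end Prob
section Part2

variable {k d : ℕ}

lemma mem_skel_iff (hd : 1 ≤ d) {e : Finset (Fin k × Fin d)} :
    e ∈ (completePartite k d).skeleton 1 ↔
      ∃ a b : Fin k × Fin d, a.1 ≠ b.1 ∧ e = {a, b} := by
  constructor
  · intro he
    rw [HyperGraph.skeleton, Finset.mem_biUnion] at he
    obtain ⟨c, hc, he⟩ := he
    rw [Finset.mem_powersetCard] at he
    obtain ⟨hec, hcard⟩ := he
    rw [Finset.card_eq_two] at hcard
    obtain ⟨a, b, hab, rfl⟩ := hcard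
    refine ⟨a, b, ?_, rfl⟩
    simp only [completePartite, Finset.mem_image] at hc
    obtain ⟨f, -, rfl⟩ := hc
    have ha := hec (Finset.mem_insert_self a {b})
    have hb := hec (by simp : b ∈ ({a, b} : Finset _))
    simp only [Finset.mem_image, Finset.mem_univ, true_and] at ha hb
    obtain ⟨i, rfl⟩ := ha
    obtain ⟨j, rfl⟩ := hb
    intro h
    simp only at h
    exact hab (by rw [h])
  · rintro ⟨a, b, hab, rfl⟩
    rw [HyperGraph.skeleton, Finset.mem_biUnion]
    refine ⟨Finset.univ.image fun i => (i, if i = b.1 then b.2 else a.2), ?_, ?_⟩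
    · simp only [completePartite, Finset.mem_image]
      exact ⟨_, Finset.mem_univ _, rfl⟩
    · rw [Finset.mem_powersetCard]
      refine ⟨?_, ?_⟩
      · rw [Finset.insert_subset_iff, Finset.singleton_subset_iff]
        constructor
        · exact Finset.mem_image.2 ⟨a.1, Finset.mem_univ _, by simp [hab]⟩
        · exact Finset.mem_image.2 ⟨b.1, Finset.mem_univ _, by simp⟩
      · rw [Finset.card_insert_of_notMem (by
          simp only [Finset.mem_singleton]
          exact fun h => hab (by rw [h])), Finset.card_singleton]

lemma deg_eq (hd : 1 ≤ d) {U : Finset (Fin k × Fin d)} {v : Fin k × Fin d} (hv : v ∈ U) :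
    (((completePartite k d).skeleton 1).filter fun e => v ∈ e ∧ e ⊆ U).card
      = (U.filter fun u => u.1 ≠ v.1).card := by
  rw [← Finset.card_image_of_injOn (f := fun u => ({v, u} : Finset (Fin k × Fin d)))
    (fun u hu u' hu' h => by
      simp only [Finset.coe_filter, Set.mem_setOf_eq] at hu hu'
      have huv : u ≠ v := fun hh => hu.2 (by rw [hh])
      have h' : ({v, u} : Finset (Fin k × Fin d)) = {v, u'} := h
      have : u ∈ ({v, u'} : Finset (Fin k × Fin d)) := by rw [← h']; simp
      simp only [Finset.mem_insert, Finset.mem_singleton] at this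
      exact this.resolve_left huv)]
  congr 1
  ext e
  simp only [Finset.mem_filter, Finset.mem_image]
  constructor
  · rintro ⟨he, hve, heU⟩
    rw [mem_skel_iff hd] at he
    obtain ⟨a, b, hab, rfl⟩ := he
    simp only [Finset.mem_insert, Finset.mem_singleton] at hve
    rcases hve with rfl | rfl
    · exact ⟨b, ⟨heU (by simp : b ∈ ({v, b} : Finset _)),
        fun h : b.1 = v.1 => hab h.symm⟩, rfl⟩
    · exact ⟨a, ⟨heU (by simp : a ∈ ({a, v} : Finset _)), hab⟩,
        by rw [Finset.pair_comm]⟩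
  · rintro ⟨u, hu, rfl⟩
    refine ⟨(mem_skel_iff hd).2 ⟨v, u, fun h => hu.2 h.symm, rfl⟩, by simp, ?_⟩
    intro x hx
    simp only [Finset.mem_insert, Finset.mem_singleton] at hx
    rcases hx with rfl | rfl
    · exact hv
    · exact hu.1

lemma count_ne (hk : 1 ≤ k) (v : Fin k × Fin d) :
    (Finset.univ.filter fun u : Fin k × Fin d => u.1 ≠ v.1).card = (k - 1) * d := by
  have h1 : (Finset.univ.filter fun u : Fin k × Fin d => u.1 = v.1) =
      {v.1} ×ˢ Finset.univ := by
    ext ⟨i, x⟩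
    simp [Finset.mem_product, eq_comm]
  have h2 := Finset.card_filter_add_card_filter_not
    (s := (Finset.univ : Finset (Fin k × Fin d))) (p := fun u => u.1 = v.1)
  rw [h1, Finset.card_product, Finset.card_singleton, Finset.card_univ, Finset.card_univ,
    Fintype.card_prod, Fintype.card_fin, Fintype.card_fin] at h2
  have : ∀ u : Fin k × Fin d, (¬ u.1 = v.1) = (u.1 ≠ v.1) := fun _ => rfl
  simp only [this] at h2
  have := Nat.sub_mul k 1 d
  omega

lemma d1_eq (hk : 2 ≤ k) (hd : 2 ≤ d) : (completePartite k d).d1 = (k - 1) * d := by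
  have hd1 : 1 ≤ d := by omega
  have hub : degenLE ((completePartite k d).skeleton 1) ((k - 1) * d) := by
    intro U hU
    obtain ⟨v, hv⟩ := hU
    refine ⟨v, hv, ?_⟩
    rw [deg_eq hd1 hv]
    calc (U.filter fun u => u.1 ≠ v.1).card
        ≤ (Finset.univ.filter fun u : Fin k × Fin d => u.1 ≠ v.1).card :=
          Finset.card_le_card (Finset.filter_subset_filter _ (Finset.subset_univ U))
      _ = (k - 1) * d := count_ne (by omega) v
  have hlb : ∀ m ∈ {m | degenLE ((completePartite k d).skeleton 1) m}, (k - 1) * d ≤ m := by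
    intro m hm
    have : Nonempty (Fin k × Fin d) := ⟨(⟨0, by omega⟩, ⟨0, by omega⟩)⟩
    obtain ⟨v, -, hv⟩ := hm Finset.univ Finset.univ_nonempty
    rwa [deg_eq hd1 (Finset.mem_univ v), count_ne (by omega) v] at hv
  exact le_antisymm (Nat.sInf_le hub) (le_csInf ⟨_, hub⟩ hlb)

end Part2
lemma completePartite_edges_card (k d : ℕ) : (completePartite k d).edges.card = d ^ k := by
  classical
  have hinj : Function.Injective
      (fun f : Fin k → Fin d => Finset.univ.image fun i => (i, f i)) := by
    intro f g h
    funext i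
    have h2 : Finset.univ.image (fun i => (i, f i)) = Finset.univ.image (fun j => (j, g j)) := h
    have hm : (i, f i) ∈ Finset.univ.image fun j => (j, g j) := by
      rw [← h2]; exact Finset.mem_image_of_mem _ (Finset.mem_univ i)
    simp only [Finset.mem_image, Finset.mem_univ, true_and] at hm
    obtain ⟨j, hj⟩ := hm
    have h1 : j = i := congrArg Prod.fst hj
    subst h1
    exact (congrArg Prod.snd hj).symm
  rw [completePartite]
  rw [Finset.card_image_of_injective _ hinj, Finset.card_univ, Fintype.card_fun,
    Fintype.card_fin, Fintype.card_fin]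

lemma turan_part (k d : ℕ) (hk : 2 ≤ k) (hd : 2 ≤ d) :
    ∃ a > (0:ℝ), ∃ n0 : ℕ, ∀ n : ℕ, n0 ≤ n →
      a * (n : ℝ) ^ ((k : ℝ) - (k : ℝ) / (d : ℝ) ^ (k - 1)) ≤
        (turanNumber k n (completePartite k d) : ℝ) := by
  classical
  have hkf : (0:ℝ) < 2 ^ (k+1) * (Nat.factorial k : ℝ) := by positivity
  refine ⟨(2 ^ (k+1) * (Nat.factorial k : ℝ))⁻¹, by positivity,
    max (2*k) (2 ^ (k+1) * Nat.factorial k), fun n hn => ?_⟩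
  set K := completePartite k d with hK
  set α : ℝ := (k : ℝ) - (k : ℝ) / (d : ℝ) ^ (k - 1) with hα
  have hn2k : 2*k ≤ n := le_trans (le_max_left _ _) hn
  have hnF : 2^(k+1) * Nat.factorial k ≤ n := le_trans (le_max_right _ _) hn
  have hn2 : 2 ≤ n := by
    have h8 : (8:ℕ) ≤ 2^(k+1) := by
      calc (8:ℕ) = 2^3 := by norm_num
        _ ≤ 2^(k+1) := Nat.pow_le_pow_right (by norm_num) (by omega)
    have hf1 : 1 ≤ Nat.factorial k := Nat.factorial_pos k
    nlinarith [hnF]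
  have hn1R : (1:ℝ) ≤ (n:ℝ) := by
    have : (1:ℕ) ≤ n := by omega
    exact_mod_cast this
  have hn0R : (0:ℝ) < (n:ℝ) := lt_of_lt_of_le one_pos hn1R
  have hD0 : (0:ℝ) < (d:ℝ)^(k-1) := by positivity
  have hDk : (k:ℝ) ≤ (d:ℝ) ^ (k-1) := by
    have h1 : k ≤ 2^(k-1) := by
      have := @Nat.lt_two_pow_self (k-1)
      omega
    have h2 : (2:ℝ)^(k-1) ≤ (d:ℝ)^(k-1) :=
      pow_le_pow_left₀ (by norm_num) (by exact_mod_cast hd) _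
    calc (k:ℝ) ≤ ((2^(k-1) : ℕ) : ℝ) := by exact_mod_cast h1
      _ = (2:ℝ)^(k-1) := by push_cast; ring
      _ ≤ _ := h2
  have hα1 : 1 ≤ α := by
    have h1 : (k:ℝ)/(d:ℝ)^(k-1) ≤ 1 := div_le_one_of_le₀ hDk (le_of_lt hD0)
    have hk2 : (2:ℝ) ≤ (k:ℝ) := by exact_mod_cast hk
    rw [hα]; linarith
  set p : ℝ := (n:ℝ) ^ (-(k:ℝ) / (d:ℝ)^(k-1)) with hp
  have hppos : 0 < p := Real.rpow_pos_of_pos hn0R _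
  have hplt1 : p < 1 := by
    refine Real.rpow_lt_one_of_one_lt_of_neg ?_ ?_
    · exact_mod_cast hn2.trans_lt' one_lt_two
    · have hk0 : (0:ℝ) < (k:ℝ) := by exact_mod_cast (by omega : 0 < k)
      exact div_neg_of_neg_of_pos (by linarith) hD0
  set q : ℝ := 1 - p with hq
  have hqpos : 0 < q := by rw [hq]; linarith
  have hpq : p + q = 1 := by rw [hq]; ring
  set A : Finset (Finset (Fin n)) := Finset.powersetCard k Finset.univ with hA
  have hAcard : A.card = n.choose k := by
    rw [hA, Finset.card_powersetCard, Finset.card_univ, Fintype.card_fin]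
  set w : Finset (Finset (Fin n)) → ℝ := fun G => p ^ G.card * q ^ (A \ G).card with hw
  set cop : Finset (Finset (Fin n)) → Finset ((Fin k × Fin d) → Fin n) := fun G =>
    Finset.univ.filter (fun f => Function.Injective f ∧ ∀ e ∈ K.edges, e.image f ∈ G) with hcop
  have E1 : ∑ G ∈ A.powerset, w G * (G.card : ℝ) = p * A.card := by
    have h1 : ∀ G ∈ A.powerset, w G * (G.card:ℝ) = ∑ e ∈ A, if e ∈ G then w G else 0 := by
      intro G hG
      rw [Finset.sum_ite_mem, Finset.inter_eq_right.2 (Finset.mem_powerset.1 hG),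
        Finset.sum_const, nsmul_eq_mul, mul_comm]
    rw [Finset.sum_congr rfl h1, Finset.sum_comm]
    have h2 : ∀ e ∈ A, (∑ G ∈ A.powerset, if e ∈ G then w G else 0) = p := by
      intro e he
      rw [← Finset.sum_filter]
      have heq : A.powerset.filter (fun G => e ∈ G) = A.powerset.filter (fun G => {e} ⊆ G) := by
        apply Finset.filter_congr; intro G _; simp
      rw [heq, hw]
      rw [sum_pq_filter_one hpq (Finset.singleton_subset_iff.2 he), Finset.card_singleton,
        pow_one]
    rw [Finset.sum_congr rfl h2, Finset.sum_const, nsmul_eq_mul, mul_comm]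
  have hTA : ∀ f : (Fin k × Fin d) → Fin n, Function.Injective f →
      (K.edges.image fun e => e.image f) ⊆ A := by
    intro f hf T hT
    simp only [Finset.mem_image] at hT
    obtain ⟨e, he, rfl⟩ := hT
    rw [hA, Finset.mem_powersetCard]
    exact ⟨Finset.subset_univ _,
      by rw [Finset.card_image_of_injective _ hf]; exact K.card_eq e he⟩
  have hcardT : ∀ f : (Fin k × Fin d) → Fin n, Function.Injective f →
      (K.edges.image fun e => e.image f).card = d ^ k := by
    intro f hf
    rw [Finset.card_image_of_injective _ (Finset.image_injective hf), hK,
      completePartite_edges_card]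
  have E2 : ∑ G ∈ A.powerset, w G * ((cop G).card : ℝ) ≤ (n:ℝ) ^ (k*d) * p ^ (d^k) := by
    have h1 : ∀ G ∈ A.powerset, w G * ((cop G).card:ℝ)
        = ∑ f : (Fin k × Fin d) → Fin n, if f ∈ cop G then w G else 0 := by
      intro G _
      rw [Finset.sum_ite_mem, Finset.univ_inter, Finset.sum_const, nsmul_eq_mul, mul_comm]
    rw [Finset.sum_congr rfl h1, Finset.sum_comm]
    have h2 : ∀ f : (Fin k × Fin d) → Fin n,
        (∑ G ∈ A.powerset, if f ∈ cop G then w G else 0) ≤ p ^ (d^k) := by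
      intro f
      by_cases hf : Function.Injective f
      · have h3 : ∀ G ∈ A.powerset, (if f ∈ cop G then w G else 0)
            = if (K.edges.image fun e => e.image f) ⊆ G then w G else 0 := by
          intro G _
          have hiff : f ∈ cop G ↔ (K.edges.image fun e => e.image f) ⊆ G := by
            rw [hcop]; simp only [Finset.mem_filter, Finset.mem_univ, true_and]
            constructor
            · rintro ⟨-, h⟩ T hT
              simp only [Finset.mem_image] at hT
              obtain ⟨e, he, rfl⟩ := hT
              exact h e he
            · intro h
              exact ⟨hf, fun e he => h (Finset.mem_image_of_mem _ he)⟩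
          simp only [hiff]
        rw [Finset.sum_congr rfl h3, ← Finset.sum_filter]
        have := sum_pq_filter_one hpq (hTA f hf)
        rw [hw]
        rw [this, hcardT f hf]
      · have h3 : ∀ G ∈ A.powerset, (if f ∈ cop G then w G else 0) = 0 := by
          intro G _
          rw [if_neg]
          rw [hcop]
          simp only [Finset.mem_filter]
          rintro ⟨-, hinj, -⟩
          exact hf hinj
        rw [Finset.sum_congr rfl h3, Finset.sum_const, smul_zero]
        positivity
    calc (∑ f : (Fin k × Fin d) → Fin n, ∑ G ∈ A.powerset, if f ∈ cop G then w G else 0)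
        ≤ ∑ _f : (Fin k × Fin d) → Fin n, p^(d^k) := Finset.sum_le_sum (fun f _ => h2 f)
      _ = (Fintype.card ((Fin k × Fin d) → Fin n) : ℝ) * p^(d^k) := by
          rw [Finset.sum_const, Finset.card_univ, nsmul_eq_mul]
      _ = (n:ℝ)^(k*d) * p^(d^k) := by
          rw [Fintype.card_fun, Fintype.card_prod, Fintype.card_fin, Fintype.card_fin,
            Fintype.card_fin]
          push_cast
          ring
  have hw1 : ∑ G ∈ A.powerset, w G = 1 := by rw [hw]; exact sum_pq_one hpq A
  have hwpos : ∀ G ∈ A.powerset, 0 < w G := fun G _ =>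
    mul_pos (pow_pos hppos _) (pow_pos hqpos _)
  have hex : ∃ G ∈ A.powerset,
      p * A.card - (n:ℝ)^(k*d) * p^(d^k) ≤ (G.card : ℝ) - ((cop G).card : ℝ) := by
    by_contra hcon
    push_neg at hcon
    have hlt : ∑ G ∈ A.powerset, w G * ((G.card:ℝ) - ((cop G).card:ℝ))
        < ∑ G ∈ A.powerset, w G * (p * A.card - (n:ℝ)^(k*d) * p^(d^k)) := by
      refine Finset.sum_lt_sum_of_nonempty ⟨∅, Finset.empty_mem_powerset A⟩ ?_
      intro G hG
      exact mul_lt_mul_of_pos_left (hcon G hG) (hwpos G hG)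
    rw [← Finset.sum_mul, hw1, one_mul] at hlt
    have hsplit : ∑ G ∈ A.powerset, w G * ((G.card:ℝ) - ((cop G).card:ℝ))
        = (∑ G ∈ A.powerset, w G * (G.card:ℝ)) - ∑ G ∈ A.powerset, w G * ((cop G).card:ℝ) := by
      rw [← Finset.sum_sub_distrib]
      apply Finset.sum_congr rfl
      intros
      ring
    rw [hsplit, E1] at hlt
    linarith [E2]
  obtain ⟨G, hGA, hGval⟩ := hex
  set e0 : Finset (Fin k × Fin d) :=
    Finset.univ.image (fun i : Fin k => (i, (⟨0, by omega⟩ : Fin d))) with he0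
  have he0K : e0 ∈ K.edges := by
    rw [hK]
    exact Finset.mem_image.2 ⟨fun _ => ⟨0, by omega⟩, Finset.mem_univ _, rfl⟩
  set Del : Finset (Finset (Fin n)) := (cop G).image (fun f => e0.image f) with hDel
  set G' : Finset (Finset (Fin n)) := G \ Del with hG'
  have hG'A : G' ⊆ A := Finset.sdiff_subset.trans (Finset.mem_powerset.1 hGA)
  set H : HyperGraph k (Fin n) :=
    ⟨G', fun e he => (Finset.mem_powersetCard.1 (hG'A he)).2⟩ with hH
  have hfree : ¬ H.ContainsCopy K := by
    rintro ⟨f, hfinj, hfe⟩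
    have hfG : f ∈ cop G := by
      rw [hcop]
      refine Finset.mem_filter.2 ⟨Finset.mem_univ _, hfinj, fun e he => ?_⟩
      exact (Finset.mem_sdiff.1 (hfe e he)).1
    have h1 : e0.image f ∈ G' := hfe e0 he0K
    exact (Finset.mem_sdiff.1 h1).2 (Finset.mem_image_of_mem _ hfG)
  have hbdd : BddAbove {m | ∃ G2 : HyperGraph k (Fin n),
      G2.edges.card = m ∧ ¬ G2.ContainsCopy K} := by
    refine ⟨Fintype.card (Finset (Fin n)), ?_⟩
    rintro m ⟨G2, rfl, -⟩
    exact (Finset.card_le_univ _).trans_eq (Finset.card_univ)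
  have hturan : G'.card ≤ turanNumber k n K := le_csSup hbdd ⟨H, rfl, hfree⟩
  have hcards : (G.card : ℝ) - ((cop G).card : ℝ) ≤ (G'.card : ℝ) := by
    have h1 : G.card ≤ G'.card + Del.card := by
      have hsub : G ⊆ G' ∪ Del := by
        intro x hx
        by_cases hxD : x ∈ Del
        · exact Finset.mem_union_right _ hxD
        · exact Finset.mem_union_left _ (Finset.mem_sdiff.2 ⟨hx, hxD⟩)
      calc G.card ≤ (G' ∪ Del).card := Finset.card_le_card hsub
        _ ≤ G'.card + Del.card := Finset.card_union_le _ _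
    have h2 : Del.card ≤ (cop G).card := Finset.card_image_le
    have h3 : G.card ≤ G'.card + (cop G).card := by omega
    have h4 : (G.card:ℝ) ≤ (G'.card:ℝ) + ((cop G).card:ℝ) := by exact_mod_cast h3
    linarith
  -- numeric key inequality
  have hsA : (n:ℝ)^(k*d) * p^(d^k) = 1 := by
    rw [hp, ← Real.rpow_natCast ((n:ℝ)) (k*d), ← Real.rpow_natCast _ (d^k),
      ← Real.rpow_mul (le_of_lt hn0R), ← Real.rpow_add hn0R]
    rw [show ((k*d : ℕ):ℝ) + -(k:ℝ)/(d:ℝ)^(k-1) * ((d^k : ℕ):ℝ) = 0 from ?_, Real.rpow_zero]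
    have hdd : ((d:ℝ))^(k-1) * (d:ℝ) = (d:ℝ)^k := by
      rw [← pow_succ]
      congr 1
      omega
    push_cast
    rw [← hdd]
    field_simp
    ring
  have hchoose : (n:ℝ)^(k:ℕ) / (2^k * (Nat.factorial k:ℝ)) ≤ (n.choose k : ℝ) := by
    have h1 := Nat.pow_le_choose k n (α := ℝ)
    have hcast : ((n+1-k : ℕ) : ℝ) = (n:ℝ) + 1 - (k:ℝ) := by
      have hkn : k ≤ n + 1 := by omega
      push_cast [hkn]
      ring
    have h2 : (n:ℝ)/2 ≤ ((n+1-k : ℕ) : ℝ) := by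
      rw [hcast]
      have : 2*(k:ℝ) ≤ (n:ℝ) := by exact_mod_cast hn2k
      linarith
    calc (n:ℝ)^(k:ℕ)/(2^k * (Nat.factorial k:ℝ))
        = ((n:ℝ)/2)^k / (Nat.factorial k:ℝ) := by
          rw [div_pow]
          ring
      _ ≤ ((n+1-k:ℕ):ℝ)^k / (Nat.factorial k:ℝ) := by
          gcongr
      _ ≤ (n.choose k : ℝ) := h1
  have hpnk : p * (n:ℝ)^(k:ℕ) = (n:ℝ)^α := by
    rw [hp, ← Real.rpow_natCast (n:ℝ) k, ← Real.rpow_add hn0R]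
    congr 1
    rw [hα]
    ring
  have hB : (n:ℝ)^α / (2^k * (Nat.factorial k:ℝ)) ≤ p * (A.card:ℝ) := by
    rw [hAcard]
    calc (n:ℝ)^α / (2^k * (Nat.factorial k:ℝ))
        = p * ((n:ℝ)^(k:ℕ) / (2^k * (Nat.factorial k:ℝ))) := by
          rw [← hpnk]
          ring
      _ ≤ p * (n.choose k : ℝ) := mul_le_mul_of_nonneg_left hchoose (le_of_lt hppos)
  have hC : (1:ℝ) ≤ (2 ^ (k+1) * (Nat.factorial k : ℝ))⁻¹ * (n:ℝ)^α := by
    rw [← div_eq_inv_mul, le_div_iff₀ hkf, one_mul]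
    calc (2:ℝ)^(k+1) * (Nat.factorial k : ℝ) = ((2^(k+1) * Nat.factorial k : ℕ) : ℝ) := by
          push_cast
          ring
      _ ≤ (n:ℝ) := by exact_mod_cast hnF
      _ = (n:ℝ)^(1:ℝ) := (Real.rpow_one _).symm
      _ ≤ (n:ℝ)^α := Real.rpow_le_rpow_of_exponent_le hn1R hα1
  have h2a : (n:ℝ)^α/(2^k * (Nat.factorial k:ℝ))
      = 2 * ((2^(k+1) * (Nat.factorial k:ℝ))⁻¹ * (n:ℝ)^α) := by
    rw [pow_succ]
    have hf0 : (0:ℝ) < (Nat.factorial k : ℝ) := by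
      have := Nat.factorial_pos k
      exact_mod_cast this
    field_simp
  have key : (2 ^ (k+1) * (Nat.factorial k : ℝ))⁻¹ * (n:ℝ)^α
      ≤ p * (A.card:ℝ) - (n:ℝ)^(k*d) * p^(d^k) := by
    rw [hsA]
    linarith [hB, hC, h2a]
  have hturanR : (G'.card : ℝ) ≤ (turanNumber k n K : ℝ) := by exact_mod_cast hturan
  linarith [key, hGval, hcards, hturanR]

/-- **Proposition (lower bound for complete `k`-partite hypergraphs).** For `d, k ≥ 2`,
`ex(n, K^(k)_{d,…,d}) ≥ a_k · n^(k − k/d^(k−1))` for some `a_k > 0` depending only on `k`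
and all sufficiently large `n`, while `d₁(K^(k)_{d,…,d}) = (k−1)d`. -/
theorem complete_partite_turan_lower (k d : ℕ) (hk : 2 ≤ k) (hd : 2 ≤ d) :
    (∃ a > (0 : ℝ), ∃ n0 : ℕ, ∀ n : ℕ, n0 ≤ n →
        a * (n : ℝ) ^ ((k : ℝ) - (k : ℝ) / (d : ℝ) ^ (k - 1)) ≤
          (turanNumber k n (completePartite k d) : ℝ)) ∧
    (completePartite k d).d1 = (k - 1) * d := by
  exact ⟨turan_part k d hk hd, d1_eq hk hd⟩
end

section
/- Let d, k, i be positive integers with 1 ≤ i < k and d > C(k, i+1), where C(a,b) denotes the binomial coefficient. Then every k-uniform hypergraph H with i-th skeletal degeneracy d_i(H) ≥ d satisfies ex(n,H) ≥ a_k · n^{k − 3^k/d} for some constant a_k > 0 depending only on k and all sufficiently large n. -/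
open Finset

/-!
Let `s = i + 1` and take a random `s`-uniform set system `F` on `n` vertices with edge probability
`q = n ^ (-γ)`, `γ = 3 ^ k / (d * C(k, s))`. Delete every edge of `F` lying inside a set of at most
`|V(H)|` vertices on which `F` has minimum degree `≥ d`, and let `G` consist of the `k`-sets all of
whose `s`-subsets survive. Since `d_i(H) ≥ d`, the `i`-skeleton of `H` has a nonempty vertex set of
minimum degree `≥ d`; a copy of `H` in `G` would carry it onto a set that the deletion destroyed,
so `G` is `H`-free.

Before deletion `G` has `C(n, k) * q ^ C(k, s) ≍ n ^ (k - 3 ^ k / d)` edges in expectation. A set of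
`u ≥ s` vertices of minimum degree `d` spans at least `d * u / s` edges, so, using
`s * C(k, s) ≤ 3 ^ k`, the deletion destroys only `O(n ^ (k - 3 ^ k / C(k, s)))` of them, which
is of smaller order because `d > C(k, s)`.
-/

open Finset

namespace SkeletalTuran

section Bernoulli

variable {α : Type*}

noncomputable def bernoulliWeight (S : Finset α) (q : ℝ) (F : Finset α) : ℝ :=
  q ^ #F * (1 - q) ^ (#S - #F)

/-- The expectation of `f` at a random subset of `S` that contains each element independently
with probability `q`. -/
noncomputable def bernoulliExpect (S : Finset α) (q : ℝ) (f : Finset α → ℝ) : ℝ :=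
  ∑ F ∈ S.powerset, bernoulliWeight S q F * f F

variable {S : Finset α} {q : ℝ}

theorem bernoulliWeight_nonneg (hq₀ : 0 ≤ q) (hq₁ : q ≤ 1) (F : Finset α) :
    0 ≤ bernoulliWeight S q F :=
  mul_nonneg (pow_nonneg hq₀ _) (pow_nonneg (sub_nonneg.2 hq₁) _)

theorem bernoulliWeight_pos (hq₀ : 0 < q) (hq₁ : q < 1) (F : Finset α) :
    0 < bernoulliWeight S q F :=
  mul_pos (pow_pos hq₀ _) (pow_pos (sub_pos.2 hq₁) _)

theorem sum_bernoulliWeight (S : Finset α) (q : ℝ) :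
    ∑ F ∈ S.powerset, bernoulliWeight S q F = 1 := by
  simp [bernoulliWeight, sum_pow_mul_eq_add_pow]

theorem bernoulliExpect_const (c : ℝ) : bernoulliExpect S q (fun _ => c) = c := by
  rw [bernoulliExpect, ← sum_mul, sum_bernoulliWeight, one_mul]

theorem bernoulliExpect_sub (f g : Finset α → ℝ) :
    bernoulliExpect S q (fun F => f F - g F) = bernoulliExpect S q f - bernoulliExpect S q g := by
  simp only [bernoulliExpect, mul_sub, sum_sub_distrib]

theorem bernoulliExpect_const_mul (c : ℝ) (f : Finset α → ℝ) :
    bernoulliExpect S q (fun F => c * f F) = c * bernoulliExpect S q f := by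
  simp only [bernoulliExpect, mul_sum]
  exact sum_congr rfl fun _ _ => mul_left_comm _ _ _

theorem bernoulliExpect_sum {ι : Type*} (J : Finset ι) (f : ι → Finset α → ℝ) :
    bernoulliExpect S q (fun F => ∑ j ∈ J, f j F) = ∑ j ∈ J, bernoulliExpect S q (f j) := by
  simp only [bernoulliExpect, mul_sum]
  exact sum_comm

theorem bernoulliExpect_mono (hq₀ : 0 ≤ q) (hq₁ : q ≤ 1) {f g : Finset α → ℝ}
    (h : ∀ F ⊆ S, f F ≤ g F) : bernoulliExpect S q f ≤ bernoulliExpect S q g :=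
  sum_le_sum fun F hF =>
    mul_le_mul_of_nonneg_left (h F (mem_powerset.1 hF)) (bernoulliWeight_nonneg hq₀ hq₁ F)

theorem exists_le_of_le_bernoulliExpect (hq₀ : 0 < q) (hq₁ : q < 1) {f : Finset α → ℝ} {c : ℝ}
    (h : c ≤ bernoulliExpect S q f) : ∃ F ⊆ S, c ≤ f F := by
  rw [← bernoulliExpect_const (S := S) (q := q) c] at h
  obtain ⟨F, hF, hle⟩ := exists_le_of_sum_le ⟨∅, empty_mem_powerset S⟩ h
  exact ⟨F, mem_powerset.1 hF, le_of_mul_le_mul_left hle (bernoulliWeight_pos hq₀ hq₁ F)⟩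

theorem bernoulliWeight_union [DecidableEq α] {A F : Finset α} (hA : A ⊆ S) (hF : F ⊆ S \ A) :
    bernoulliWeight S q (F ∪ A) = q ^ #A * bernoulliWeight (S \ A) q F := by
  have hdisj : Disjoint F A := disjoint_of_subset_left hF sdiff_disjoint
  have hFA : #F ≤ #S - #A := card_sdiff_of_subset hA ▸ card_le_card hF
  rw [bernoulliWeight, bernoulliWeight, card_union_of_disjoint hdisj, card_sdiff_of_subset hA,
    pow_add, show #S - (#F + #A) = #S - #A - #F by omega]
  ring

theorem bernoulliExpect_indicator_subset [DecidableEq α] {A : Finset α} (hA : A ⊆ S) :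
    bernoulliExpect S q (fun F => if A ⊆ F then 1 else 0) = q ^ #A := by
  have himage : {F ∈ S.powerset | A ⊆ F} = (S \ A).powerset.image (· ∪ A) := by
    ext F
    simp only [mem_filter, mem_powerset, mem_image]
    constructor
    · rintro ⟨hFS, hAF⟩
      exact ⟨F \ A, sdiff_subset_sdiff hFS le_rfl, sdiff_union_of_subset hAF⟩
    · rintro ⟨F', hF', rfl⟩
      exact ⟨union_subset (hF'.trans sdiff_subset) hA, subset_union_right⟩
  have hinj : Set.InjOn (· ∪ A) ((S \ A).powerset : Set (Finset α)) := by
    intro F₁ h₁ F₂ h₂ h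
    simp only [coe_powerset, Set.mem_preimage, Set.mem_powerset_iff, coe_subset] at h₁ h₂
    rw [← union_sdiff_cancel_right (disjoint_of_subset_left h₁ sdiff_disjoint),
      ← union_sdiff_cancel_right (disjoint_of_subset_left h₂ sdiff_disjoint)]
    exact congrArg (· \ A) h
  simp only [bernoulliExpect, mul_ite, mul_one, mul_zero]
  rw [← sum_filter, himage, sum_image hinj,
    sum_congr rfl fun F hF => bernoulliWeight_union hA (mem_powerset.1 hF), ← mul_sum,
    sum_bernoulliWeight, mul_one]

end Bernoulli

section MinDegree

variable {α : Type*} [DecidableEq α]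

def HasMinDegree (E : Finset (Finset α)) (d : ℕ) (W : Finset α) : Prop :=
  ∀ w ∈ W, d ≤ #{e ∈ E | w ∈ e ∧ e ⊆ W}

instance (E : Finset (Finset α)) (d : ℕ) : DecidablePred (HasMinDegree E d) :=
  fun _ => inferInstanceAs (Decidable (∀ w ∈ _, _))

variable {E F : Finset (Finset α)} {d s : ℕ} {W : Finset α}

theorem HasMinDegree.mono (h : HasMinDegree E d W) (hEF : E ⊆ F) : HasMinDegree F d W :=
  fun w hw => (h w hw).trans (card_le_card (filter_subset_filter _ hEF))

theorem exists_hasMinDegree_of_le_degeneracy {α : Type} [DecidableEq α] {E : Finset (Finset α)}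
    (hd : 0 < d) (h : d ≤ degeneracy E) :
    ∃ U : Finset α, U.Nonempty ∧ HasMinDegree E d U := by
  by_contra! hE
  have hdeg : degenLE E (d - 1) := fun U hU => by
    obtain ⟨v, hv, hlt⟩ := not_forall₂.1 (hE U hU)
    exact ⟨v, hv, by omega⟩
  have := Nat.sInf_le (s := {d | degenLE E d}) hdeg
  unfold degeneracy at h
  omega

theorem HasMinDegree.card_mul_le (h : HasMinDegree E d W) (hE : ∀ e ∈ E, #e = s) :
    #W * d ≤ #{e ∈ E | e ⊆ W} * s := by
  refine card_mul_le_card_mul (fun w e => w ∈ e) (fun w hw => (h w hw).trans_eq ?_) ?_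
  · simp only [bipartiteAbove, filter_filter, and_comm]
  · intro e he
    rw [mem_filter] at he
    simp only [bipartiteBelow, filter_mem_eq_inter, inter_eq_right.2 he.2, hE e he.1, le_rfl]

theorem HasMinDegree.image {β : Type*} [DecidableEq β] {F : Finset (Finset β)} {f : α → β}
    (hf : Function.Injective f) (hEF : ∀ e ∈ E, e ⊆ W → e.image f ∈ F)
    (h : HasMinDegree E d W) : HasMinDegree F d (W.image f) := by
  simp only [HasMinDegree, forall_mem_image]
  refine fun w hw => (h w hw).trans (card_le_card_of_injOn (·.image f) ?_ ?_)
  · intro e he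
    simp only [coe_filter, Set.mem_ofPred_eq] at he ⊢
    exact ⟨hEF e he.1 he.2.2, mem_image_of_mem f he.2.1, image_subset_image he.2.2⟩
  · exact fun e₁ _ e₂ _ h => image_injective hf h

end MinDegree

section Deletion

variable {α : Type*} [Fintype α] [DecidableEq α]

def prune (F : Finset (Finset α)) (d m : ℕ) : Finset (Finset α) :=
  {e ∈ F | ∀ W : Finset α, #W ≤ m → HasMinDegree F d W → ¬ e ⊆ W}

def cliques (s k : ℕ) (F : Finset (Finset α)) : Finset (Finset α) :=
  {K ∈ powersetCard k univ | K.powersetCard s ⊆ F}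

variable {F G : Finset (Finset α)} {d m s k : ℕ}

theorem prune_subset : prune F d m ⊆ F := filter_subset _ _

theorem not_hasMinDegree_prune (hd : 0 < d) {W : Finset α} (hW : W.Nonempty) (hm : #W ≤ m) :
    ¬ HasMinDegree (prune F d m) d W := by
  intro h
  obtain ⟨w, hw⟩ := hW
  obtain ⟨e, he⟩ := card_pos.1 (hd.trans_le (h w hw))
  simp only [mem_filter, prune] at he
  exact he.1.2 W hm (h.mono prune_subset) he.2.2

theorem card_sdiff_prune_le (hF : ∀ e ∈ F, #e = s) :
    #(F \ prune F d m) ≤ ∑ W with #W ≤ m ∧ HasMinDegree F d W, (#W).choose s := by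
  calc #(F \ prune F d m)
      ≤ #(({W | #W ≤ m ∧ HasMinDegree F d W} : Finset _).biUnion (powersetCard s)) := by
        refine card_le_card fun e he => ?_
        simp only [mem_sdiff, prune, mem_filter, not_and, not_forall, not_not] at he
        obtain ⟨W, hWm, hW, heW⟩ := he.2 he.1
        exact mem_biUnion.2 ⟨W, mem_filter.2 ⟨mem_univ W, hWm, hW⟩,
          mem_powersetCard.2 ⟨heW, hF e he.1⟩⟩
    _ ≤ ∑ W with #W ≤ m ∧ HasMinDegree F d W, (#W).choose s := by
        simpa only [card_powersetCard] using
          card_biUnion_le (s := ({W | #W ≤ m ∧ HasMinDegree F d W} : Finset _))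
            (t := powersetCard s)

/-- A clique of `F` that is not a clique of `G` contains an `s`-set of `F \ G`, so is the union
of that set with a `(k - s)`-set. -/
theorem card_cliques_le_card_cliques_add (hF : ∀ e ∈ F, #e = s) :
    #(cliques s k F) ≤
      #(cliques s k G) + #(F \ G) * (Fintype.card α).choose (k - s) := by
  have hcover : cliques s k F \ cliques s k G ⊆
      (F \ G).biUnion fun e => (powersetCard (k - s) univ).image (· ∪ e) := by
    intro K hK
    simp only [mem_sdiff, cliques, mem_filter, not_and, mem_powersetCard_univ] at hK
    obtain ⟨e, heK, heG⟩ := not_subset.1 (hK.2 hK.1.1)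
    have heF := hK.1.2 heK
    rw [mem_powersetCard] at heK
    refine mem_biUnion.2 ⟨e, mem_sdiff.2 ⟨heF, heG⟩, mem_image.2 ⟨K \ e, ?_, ?_⟩⟩
    · rw [mem_powersetCard_univ, card_sdiff_of_subset heK.1, hK.1.1, hF e heF]
    · exact sdiff_union_of_subset heK.1
  calc #(cliques s k F)
      ≤ #(cliques s k F \ cliques s k G) + #(cliques s k G) := card_le_card_sdiff_add_card
    _ ≤ #(F \ G) * (Fintype.card α).choose (k - s) + #(cliques s k G) := by
        gcongr
        refine (card_le_card hcover).trans (card_biUnion_le_card_mul _ _ _ fun e _ => ?_)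
        exact card_image_le.trans_eq (by rw [card_powersetCard, card_univ])
    _ = _ := add_comm _ _

end Deletion

section RandomSetSystem

/-- A bound on the expected total size, measured in `s`-sets, of the sets of at most `m` vertices
spanning minimum degree `d` in a random `s`-uniform set system on `n` vertices. -/
noncomputable def coreLossBound (n s d m : ℕ) (q : ℝ) : ℝ :=
  ∑ u ∈ range (m + 1), n.choose u * (u.choose s * 2 ^ u.choose s * q ^ ((d * u : ℕ) / s : ℝ))

variable {α : Type*} [Fintype α] [DecidableEq α] {s d : ℕ} {q : ℝ}

theorem bernoulliExpect_card_cliques (s k : ℕ) (q : ℝ) :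
    bernoulliExpect (powersetCard s (univ : Finset α)) q (fun F => (#(cliques s k F) : ℝ)) =
      (Fintype.card α).choose k * q ^ k.choose s := by
  have hcount : ∀ F : Finset (Finset α), (#(cliques s k F) : ℝ) =
      ∑ K ∈ powersetCard k univ, if K.powersetCard s ⊆ F then 1 else 0 := fun F => by
    rw [cliques, card_filter]; push_cast; rfl
  simp only [hcount, bernoulliExpect_sum]
  rw [sum_congr rfl fun K hK => ?_, sum_const, card_powersetCard, card_univ, nsmul_eq_mul]
  rw [bernoulliExpect_indicator_subset, card_powersetCard, mem_powersetCard_univ.1 hK]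
  exact fun e he => mem_powersetCard_univ.2 (mem_powersetCard.1 he).2

/-- `W` has minimum degree `d` only if the edges inside `W` form a family `T` of `s`-subsets of
`W` with `s * #T ≥ d * #W`; each such `T` is present with probability `q ^ #T`. -/
theorem bernoulliExpect_hasMinDegree_le (hs : 0 < s) (hq₀ : 0 < q) (hq₁ : q ≤ 1)
    (W : Finset α) :
    bernoulliExpect (powersetCard s univ) q (fun F => if HasMinDegree F d W then 1 else 0) ≤
      2 ^ (#W).choose s * q ^ ((d * #W : ℕ) / s : ℝ) := by
  set 𝒯 := {T ∈ (W.powersetCard s).powerset | #W * d ≤ #T * s}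
  have hcover : ∀ F ⊆ powersetCard s univ,
      (if HasMinDegree F d W then 1 else 0 : ℝ) ≤ ∑ T ∈ 𝒯, if T ⊆ F then 1 else 0 := by
    intro F hF
    split_ifs with h
    · have hT : {e ∈ F | e ⊆ W} ∈ 𝒯 := by
        refine mem_filter.2 ⟨mem_powerset.2 fun e he => ?_, ?_⟩
        · rw [mem_filter] at he
          exact mem_powersetCard.2 ⟨he.2, (mem_powersetCard_univ.1 (hF he.1))⟩
        · exact h.card_mul_le fun e he => mem_powersetCard_univ.1 (hF he)
      exact single_le_sum (f := fun T => if T ⊆ F then (1 : ℝ) else 0)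
        (fun _ _ => by positivity) hT |>.trans_eq' (if_pos (filter_subset _ _))
    · exact sum_nonneg fun _ _ => by positivity
  have hterm : ∀ T ∈ 𝒯, q ^ #T ≤ q ^ ((d * #W : ℕ) / s : ℝ) := by
    intro T hT
    rw [← Real.rpow_natCast]
    refine Real.rpow_le_rpow_of_exponent_ge hq₀ hq₁ ?_
    rw [div_le_iff₀ (by positivity)]
    exact_mod_cast (mul_comm d _).trans_le (mem_filter.1 hT).2
  calc _ ≤ bernoulliExpect (powersetCard s univ) q
          (fun F => ∑ T ∈ 𝒯, if T ⊆ F then 1 else 0) :=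
        bernoulliExpect_mono hq₀.le hq₁ hcover
    _ = ∑ T ∈ 𝒯, q ^ #T := by
        rw [bernoulliExpect_sum]
        refine sum_congr rfl fun T hT => bernoulliExpect_indicator_subset fun e he => ?_
        have := mem_powerset.1 (mem_filter.1 hT).1 he
        exact mem_powersetCard_univ.2 (mem_powersetCard.1 this).2
    _ ≤ #𝒯 * q ^ ((d * #W : ℕ) / s : ℝ) := by
        simpa using sum_le_card_nsmul 𝒯 _ _ hterm
    _ ≤ 2 ^ (#W).choose s * q ^ ((d * #W : ℕ) / s : ℝ) := by
        gcongr
        calc (#𝒯 : ℝ) ≤ #(W.powersetCard s).powerset := by exact_mod_cast card_filter_le _ _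
          _ = 2 ^ (#W).choose s := by rw [card_powerset, card_powersetCard]; push_cast; rfl

theorem bernoulliExpect_coreLoss_le (hs : 0 < s) (hq₀ : 0 < q) (hq₁ : q ≤ 1) (m : ℕ) :
    bernoulliExpect (powersetCard s univ) q
        (fun F => ∑ W : Finset α with #W ≤ m ∧ HasMinDegree F d W, ((#W).choose s : ℝ)) ≤
      coreLossBound (Fintype.card α) s d m q := by
  set b : ℕ → ℝ := fun u => u.choose s * 2 ^ u.choose s * q ^ ((d * u : ℕ) / s : ℝ)
  have hsmall : ∀ u ∈ range (m + 1),
      ({W | #W ≤ m ∧ #W = u} : Finset (Finset α)) = powersetCard u univ := fun u hu => by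
    have := mem_range.1 hu
    ext W
    simp only [mem_filter, mem_univ, true_and, mem_powersetCard_univ]
    omega
  have hsplit : ∀ F : Finset (Finset α),
      ∑ W : Finset α with #W ≤ m ∧ HasMinDegree F d W, ((#W).choose s : ℝ) =
        ∑ W : Finset α with #W ≤ m, ((#W).choose s : ℝ) * if HasMinDegree F d W then 1 else 0 :=
    fun F => by rw [← filter_filter, sum_filter]; simp only [mul_ite, mul_one, mul_zero]
  calc _ = ∑ W : Finset α with #W ≤ m, ((#W).choose s : ℝ) * bernoulliExpect
          (powersetCard s univ) q (fun F => if HasMinDegree F d W then 1 else 0) := by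
        simp only [hsplit, bernoulliExpect_sum, bernoulliExpect_const_mul]
    _ ≤ ∑ W : Finset α with #W ≤ m, b #W :=
        sum_le_sum fun W _ => by
          simp only [b, mul_assoc]
          exact mul_le_mul_of_nonneg_left (bernoulliExpect_hasMinDegree_le hs hq₀ hq₁ W)
            (by positivity)
    _ = coreLossBound (Fintype.card α) s d m q := by
        rw [← sum_fiberwise_of_maps_to (g := card) (t := range (m + 1))
          fun W hW => mem_range.2 (Nat.lt_succ_of_le (mem_filter.1 hW).2)]
        refine sum_congr rfl fun u hu => ?_
        rw [filter_filter, hsmall u hu, sum_congr rfl fun W hW => by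
          rw [(mem_powersetCard_univ.1 hW)], sum_const, card_powersetCard, card_univ,
          nsmul_eq_mul]

theorem card_cliques_sub_coreLoss_le_card_cliques_prune {F : Finset (Finset α)}
    (hF : ∀ e ∈ F, #e = s) (k m : ℕ) :
    (#(cliques s k F) : ℝ) - (Fintype.card α).choose (k - s) *
        ∑ W : Finset α with #W ≤ m ∧ HasMinDegree F d W, ((#W).choose s : ℝ) ≤
      #(cliques s k (prune F d m)) := by
  have h := (card_cliques_le_card_cliques_add (G := prune F d m) (k := k) hF).trans
    (Nat.add_le_add_left (Nat.mul_le_mul_right _ (card_sdiff_prune_le hF)) _)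
  rw [sub_le_iff_le_add, mul_comm]
  exact_mod_cast h

theorem exists_card_cliques_prune_ge (hs : 0 < s) (hq₀ : 0 < q) (hq₁ : q < 1) (k m : ℕ) :
    ∃ F ⊆ powersetCard s (univ : Finset α),
      (Fintype.card α).choose k * q ^ k.choose s -
          (Fintype.card α).choose (k - s) * coreLossBound (Fintype.card α) s d m q ≤
        #(cliques s k (prune F d m)) := by
  refine exists_le_of_le_bernoulliExpect hq₀ hq₁ ?_
  calc _ ≤ bernoulliExpect (powersetCard s univ) q (fun F => (#(cliques s k F) : ℝ) -
          (Fintype.card α).choose (k - s) *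
            ∑ W : Finset α with #W ≤ m ∧ HasMinDegree F d W, ((#W).choose s : ℝ)) := by
        rw [bernoulliExpect_sub, bernoulliExpect_const_mul, bernoulliExpect_card_cliques]
        gcongr
        exact bernoulliExpect_coreLoss_le hs hq₀ hq₁.le m
    _ ≤ _ := bernoulliExpect_mono hq₀.le hq₁.le fun F hF =>
        card_cliques_sub_coreLoss_le_card_cliques_prune
          (fun e he => mem_powersetCard_univ.1 (hF he)) k m

end RandomSetSystem

section Turan

variable {k n : ℕ} {V : Type} [DecidableEq V] {H : HyperGraph k V}

theorem card_edges_le_turanNumber (G : HyperGraph k (Fin n)) (hG : ¬ G.ContainsCopy H) :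
    #G.edges ≤ turanNumber k n H := by
  refine le_csSup ⟨Fintype.card (Finset (Fin n)), ?_⟩ ⟨G, rfl, hG⟩
  rintro _ ⟨G', rfl, -⟩
  exact card_le_univ _

def cliqueHyperGraph {W : Type} [Fintype W] [DecidableEq W] (s k : ℕ) (P : Finset (Finset W)) :
    HyperGraph k W :=
  ⟨cliques s k P, fun _ he => mem_powersetCard_univ.1 (mem_filter.1 he).1⟩

/-- An embedding of `H` into the clique hypergraph of `P` carries a set of minimum degree `d`
in the `i`-skeleton of `H` to one in `P`; pruning leaves no such set. -/
theorem not_containsCopy_cliqueHyperGraph_prune [Fintype V] {W : Type} [Fintype W] [DecidableEq W]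
    {i d : ℕ} (hd : 0 < d) {U : Finset V} (hU : U.Nonempty)
    (hUd : HasMinDegree (H.skeleton i) d U) (F : Finset (Finset W)) :
    ¬ (cliqueHyperGraph (i + 1) k (prune F d (Fintype.card V))).ContainsCopy H := by
  rintro ⟨f, hf, hfH⟩
  refine not_hasMinDegree_prune (F := F) hd (hU.image f) (card_image_le.trans (card_le_univ U))
    (hUd.image hf fun e he _ => ?_)
  obtain ⟨e', he', hee'⟩ := mem_biUnion.1 he
  rw [mem_powersetCard] at hee'
  refine (mem_filter.1 (hfH e' he')).2 (mem_powersetCard.2 ⟨image_subset_image hee'.1, ?_⟩)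
  rw [card_image_of_injective e hf, hee'.2]

theorem card_cliques_prune_le_turanNumber [Fintype V] {i d : ℕ} (hd : 0 < d) {U : Finset V}
    (hU : U.Nonempty) (hUd : HasMinDegree (H.skeleton i) d U) (F : Finset (Finset (Fin n))) :
    #(cliques (i + 1) k (prune F d (Fintype.card V))) ≤ turanNumber k n H :=
  card_edges_le_turanNumber _ (not_containsCopy_cliqueHyperGraph_prune hd hU hUd F)

end Turan

section Asymptotics

open Real

theorem mul_choose_le_three_pow (k s : ℕ) : s * k.choose s ≤ 3 ^ k := by
  rcases lt_or_ge k s with hks | hsk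
  · simp [Nat.choose_eq_zero_of_lt hks]
  calc s * k.choose s ≤ 2 ^ s * 1 ^ (k - s) * k.choose s := by
        rw [one_pow, mul_one]
        exact Nat.mul_le_mul_right _ Nat.lt_two_pow_self.le
    _ ≤ ∑ j ∈ range (k + 1), 2 ^ j * 1 ^ (k - j) * k.choose j :=
        single_le_sum (f := fun j => 2 ^ j * 1 ^ (k - j) * k.choose j) (fun _ _ => Nat.zero_le _)
          (mem_range.2 (Nat.lt_succ_of_le hsk))
    _ = 3 ^ k := (add_pow 2 1 k).symm

theorem pow_div_le_choose {n k : ℕ} (hn : 2 * k ≤ n) :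
    (n : ℝ) ^ k / (2 ^ k * k.factorial) ≤ n.choose k := by
  refine le_trans ?_ (Nat.pow_le_choose k n)
  rw [← div_div, ← div_pow]
  gcongr
  rw [div_le_iff₀ two_pos]
  exact_mod_cast (by omega : n ≤ (n + 1 - k) * 2)

/-- The `u`-th term is at most a constant times `n ^ (u * (1 - γ * d / s))`; as `γ * d ≥ s` this
is largest at `u = s`, and the terms with `u < s` vanish. -/
theorem coreLossBound_rpow_neg_le {n s d : ℕ} {γ : ℝ} (hn : 1 ≤ n) (hs : 0 < s)
    (hsd : (s : ℝ) ≤ γ * d) (m : ℕ) :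
    coreLossBound n s d m ((n : ℝ) ^ (-γ)) ≤
      (∑ u ∈ range (m + 1), (u.choose s * 2 ^ u.choose s : ℝ)) * (n : ℝ) ^ ((s : ℝ) - γ * d) := by
  have hx : (1 : ℝ) ≤ n := by exact_mod_cast hn
  rw [coreLossBound, sum_mul]
  refine sum_le_sum fun u _ => ?_
  rcases lt_or_ge u s with hus | hsu
  · simp [Nat.choose_eq_zero_of_lt hus]
  have hexp : (u : ℝ) + -γ * ((d * u : ℕ) / s : ℝ) ≤ s - γ * d := by
    have hsu' : (s : ℝ) ≤ u := by exact_mod_cast hsu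
    have hs' : (0 : ℝ) < s := by exact_mod_cast hs
    have hgain : (u : ℝ) - s ≤ (γ * d) * ((u : ℝ) - s) / s := by
      have := mul_le_mul_of_nonneg_right hsd (sub_nonneg.2 hsu')
      rw [le_div_iff₀ hs']
      linarith
    have hsplit : -γ * ((d * u : ℕ) / s : ℝ) = -(γ * d) - (γ * d) * ((u : ℝ) - s) / s := by
      push_cast
      field_simp
      ring
    linarith
  calc (n.choose u : ℝ) * (u.choose s * 2 ^ u.choose s * ((n : ℝ) ^ (-γ)) ^ ((d * u : ℕ) / s : ℝ))
      ≤ (n : ℝ) ^ (u : ℝ) * (u.choose s * 2 ^ u.choose s * ((n : ℝ) ^ (-γ)) ^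
          ((d * u : ℕ) / s : ℝ)) := by
        gcongr
        rw [rpow_natCast]
        exact_mod_cast Nat.choose_le_pow n u
    _ = (u.choose s * 2 ^ u.choose s : ℝ) * (n : ℝ) ^ ((u : ℝ) + -γ * ((d * u : ℕ) / s : ℝ)) := by
        rw [← rpow_mul (by positivity), rpow_add (by positivity)]
        ring
    _ ≤ (u.choose s * 2 ^ u.choose s : ℝ) * (n : ℝ) ^ ((s : ℝ) - γ * d) := by
        gcongr

theorem le_choose_mul_sub_coreLossBound {n k s d m : ℕ} {γ a : ℝ} (hn : 2 * k ≤ n) (hn₁ : 1 ≤ n)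
    (hs : 0 < s) (hsk : s ≤ k) (hsd : (s : ℝ) ≤ γ * d) (ha : a = (2 ^ (k + 1) * k.factorial : ℝ)⁻¹)
    (hc : ∑ u ∈ range (m + 1), (u.choose s * 2 ^ u.choose s : ℝ) ≤
      a * (n : ℝ) ^ (γ * (d - k.choose s))) :
    a * (n : ℝ) ^ ((k : ℝ) - γ * k.choose s) ≤
      n.choose k * ((n : ℝ) ^ (-γ)) ^ k.choose s -
        n.choose (k - s) * coreLossBound n s d m ((n : ℝ) ^ (-γ)) := by
  set c := ∑ u ∈ range (m + 1), (u.choose s * 2 ^ u.choose s : ℝ)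
  have hx : (0 : ℝ) < n := by exact_mod_cast hn₁
  have hmain : 2 * a * (n : ℝ) ^ ((k : ℝ) - γ * k.choose s) ≤
      n.choose k * ((n : ℝ) ^ (-γ)) ^ k.choose s := by
    rw [← rpow_natCast ((n : ℝ) ^ (-γ)), ← rpow_mul hx.le, sub_eq_add_neg, rpow_add hx,
      rpow_natCast, ← mul_assoc, neg_mul]
    gcongr
    calc 2 * a * (n : ℝ) ^ k = (n : ℝ) ^ k / (2 ^ k * k.factorial) := by
          rw [ha, pow_succ]; field_simp
      _ ≤ n.choose k := pow_div_le_choose hn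
  have hloss : n.choose (k - s) * coreLossBound n s d m ((n : ℝ) ^ (-γ)) ≤
      a * (n : ℝ) ^ ((k : ℝ) - γ * k.choose s) := by
    calc n.choose (k - s) * coreLossBound n s d m ((n : ℝ) ^ (-γ))
        ≤ n.choose (k - s) * (c * (n : ℝ) ^ ((s : ℝ) - γ * d)) := by
          gcongr
          exact coreLossBound_rpow_neg_le hn₁ hs hsd m
      _ ≤ (n : ℝ) ^ ((k - s : ℕ) : ℝ) * (c * (n : ℝ) ^ ((s : ℝ) - γ * d)) := by
          gcongr
          rw [rpow_natCast]
          exact_mod_cast Nat.choose_le_pow n (k - s)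
      _ = c * (n : ℝ) ^ ((k : ℝ) - γ * d) := by
          rw [mul_left_comm, ← rpow_add hx, Nat.cast_sub hsk]
          ring_nf
      _ ≤ a * (n : ℝ) ^ (γ * (d - k.choose s)) * (n : ℝ) ^ ((k : ℝ) - γ * d) := by gcongr
      _ = a * (n : ℝ) ^ ((k : ℝ) - γ * k.choose s) := by
          rw [mul_assoc, ← rpow_add hx]
          ring_nf
  have ha₀ : 0 ≤ a * (n : ℝ) ^ ((k : ℝ) - γ * k.choose s) := by rw [ha]; positivity
  linarith

theorem eventually_le_turanNumber {k i d : ℕ} {γ : ℝ} (hik : i < k) (hd : k.choose (i + 1) < d)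
    (hγd : ((i + 1 : ℕ) : ℝ) ≤ γ * d) {V : Type} [Fintype V] [DecidableEq V]
    {H : HyperGraph k V} (hH : d ≤ H.skelDegen i) :
    ∀ᶠ n : ℕ in Filter.atTop, (2 ^ (k + 1) * k.factorial : ℝ)⁻¹ *
      (n : ℝ) ^ ((k : ℝ) - γ * k.choose (i + 1)) ≤ turanNumber k n H := by
  set a : ℝ := (2 ^ (k + 1) * k.factorial : ℝ)⁻¹ with ha
  have hs : 0 < i + 1 := Nat.succ_pos i
  have hd₀ : 0 < d := (Nat.zero_le _).trans_lt hd
  have hγ : 0 < γ := pos_of_mul_pos_left ((Nat.cast_pos.2 hs).trans_le hγd) (Nat.cast_nonneg d)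
  obtain ⟨U, hU, hUd⟩ := exists_hasMinDegree_of_le_degeneracy hd₀ hH
  have hgap : 0 < γ * (d - k.choose (i + 1)) := mul_pos hγ (sub_pos.2 (by exact_mod_cast hd))
  have hlim : Filter.Tendsto (fun n : ℕ => a * (n : ℝ) ^ (γ * (d - k.choose (i + 1))))
      Filter.atTop Filter.atTop :=
    ((tendsto_rpow_atTop hgap).comp tendsto_natCast_atTop_atTop).const_mul_atTop (by positivity)
  filter_upwards [Filter.eventually_ge_atTop (2 * k), hlim.eventually_ge_atTop
    (∑ u ∈ range (Fintype.card V + 1), (u.choose (i + 1) * 2 ^ u.choose (i + 1) : ℝ))]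
    with n hn hc
  have hn₁ : (1 : ℝ) < n := by exact_mod_cast (by omega : 1 < n)
  obtain ⟨F, -, hF⟩ := exists_card_cliques_prune_ge (α := Fin n) (d := d) hs
    (rpow_pos_of_pos (zero_lt_one.trans hn₁) _)
    (rpow_lt_one_of_one_lt_of_neg hn₁ (neg_neg_of_pos hγ)) k (Fintype.card V)
  rw [Fintype.card_fin] at hF
  calc _ ≤ _ := le_choose_mul_sub_coreLossBound hn (by omega) hs hik hγd ha hc
    _ ≤ _ := hF
    _ ≤ _ := by exact_mod_cast card_cliques_prune_le_turanNumber hd₀ hU hUd F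

end Asymptotics

end SkeletalTuran

/-- **Theorem (Turán lower bound via `i`-th skeletal degeneracy).** There is a constant
`a_k > 0` depending only on `k` such that for all `1 ≤ i < k` and `d > C(k, i+1)`, every
`k`-uniform hypergraph `H` with `d_i(H) ≥ d` satisfies `ex(n,H) ≥ a_k · n^(k − 3^k/d)`
for all sufficiently large `n`. -/
theorem turan_lower_bound_ith_skeletal (k : ℕ) :
    ∃ a > (0 : ℝ),
      ∀ d i : ℕ, 1 ≤ i → i < k → Nat.choose k (i + 1) < d →
      ∀ (V : Type) [Fintype V] [DecidableEq V] (H : HyperGraph k V),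
        d ≤ H.skelDegen i →
        ∃ n0 : ℕ, ∀ n : ℕ, n0 ≤ n →
          a * (n : ℝ) ^ ((k : ℝ) - (3 : ℝ) ^ k / (d : ℝ)) ≤ (turanNumber k n H : ℝ) := by
  refine ⟨(2 ^ (k + 1) * k.factorial : ℝ)⁻¹, by positivity, fun d i _ hik hd V _ _ H hH => ?_⟩
  have hC : (0 : ℝ) < k.choose (i + 1) := by exact_mod_cast Nat.choose_pos (by omega)
  have hd₀ : (0 : ℝ) < d := hC.trans (by exact_mod_cast hd)
  set γ : ℝ := 3 ^ k / (d * k.choose (i + 1)) with hγ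
  have hγC : γ * k.choose (i + 1) = 3 ^ k / d := by rw [hγ]; field_simp
  have hγd : ((i + 1 : ℕ) : ℝ) ≤ γ * d := by
    rw [show γ * d = 3 ^ k / k.choose (i + 1) by rw [hγ]; field_simp, le_div_iff₀ hC]
    exact_mod_cast SkeletalTuran.mul_choose_le_three_pow k (i + 1)
  have h := SkeletalTuran.eventually_le_turanNumber hik hd hγd hH
  rw [hγC] at h
  exact Filter.eventually_atTop.1 h
end

section
/- For every integer k ≥ 2 and every integer d > k(k−1)/2, every k-uniform hypergraph H with skeletal degeneracy d_1(H) ≥ d satisfies ex(n,H) ≥ a_k · n^{k − k(k−1)/d} for some constant a_k > 0 depending only on k and all sufficiently large n. -/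
/-!
Random construction with deletion. Since `d ≤ d₁(H)`, the 1-skeleton of `H` has a subgraph `F`
with `u` vertices and `m ≥ u d / 2` edges. In the binomial random graph `G(n, p)` with
`p = n^(-2/d)` the expected number of `k`-cliques is `C(n, k) p^(k choose 2) ≍ n^(k - k(k-1)/d)`,
while the expected number of copies of `F` is at most `n^u p^m ≤ 1`. Deleting one edge from every
copy of `F` makes the `k`-clique hypergraph `H`-free, since a copy of `H` in it would contain a
copy of `F` in the graph, and costs at most `n^(k-2)` cliques per deleted edge, which is
negligible because `d > k(k-1)/2`.
-/

open Finset

open scoped Nat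

section BinomialWeight

variable {α : Type*}

/-- The probability that the binomial random subset of `P`, keeping each element independently
with probability `p`, equals `t`. -/
def binomialWeight (P : Finset α) (p : ℝ) (t : Finset α) : ℝ :=
  p ^ #t * (1 - p) ^ (#P - #t)

lemma binomialWeight_pos {P : Finset α} {p : ℝ} (hp0 : 0 < p) (hp1 : p < 1) (t : Finset α) :
    0 < binomialWeight P p t := by
  have : 0 < 1 - p := by linarith
  unfold binomialWeight
  positivity

variable [DecidableEq α]

lemma sum_binomialWeight_filter_superset {P T : Finset α} (hT : T ⊆ P) (p : ℝ) :
    ∑ t ∈ P.powerset with T ⊆ t, binomialWeight P p t = p ^ #T := by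
  have hfactor : ∀ t ∈ P.powerset, (if T ⊆ t then binomialWeight P p t else 0) =
      p ^ #t * ∏ i ∈ P \ t, (if i ∈ T then 0 else 1 - p) := by
    intro t ht
    by_cases hTt : T ⊆ t
    · have hcompl : ∀ i ∈ P \ t, (if i ∈ T then 0 else 1 - p) = 1 - p := fun i hi =>
        if_neg fun hiT => (mem_sdiff.1 hi).2 (hTt hiT)
      rw [if_pos hTt, prod_congr rfl hcompl, prod_const, card_sdiff_of_subset (mem_powerset.1 ht),
        binomialWeight]
    · obtain ⟨i, hiT, hit⟩ := not_subset.1 hTt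
      have hzero : ∏ j ∈ P \ t, (if j ∈ T then 0 else 1 - p) = 0 :=
        prod_eq_zero (mem_sdiff.2 ⟨hT hiT, hit⟩) (if_pos hiT)
      rw [if_neg hTt, hzero, mul_zero]
  calc ∑ t ∈ P.powerset with T ⊆ t, binomialWeight P p t
      = ∑ t ∈ P.powerset, p ^ #t * ∏ i ∈ P \ t, (if i ∈ T then 0 else 1 - p) := by
        rw [sum_filter]; exact sum_congr rfl hfactor
    _ = ∏ i ∈ P, (p + if i ∈ T then 0 else 1 - p) := by
        rw [prod_add]; simp only [prod_const]
    _ = p ^ #T := by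
        simp only [add_ite, add_zero, add_sub_cancel, prod_ite_mem, prod_const, inter_eq_right.2 hT]

lemma sum_binomialWeight (P : Finset α) (p : ℝ) : ∑ t ∈ P.powerset, binomialWeight P p t = 1 := by
  simpa using sum_binomialWeight_filter_superset (empty_subset P) p

lemma sum_binomialWeight_mul_card_filter_subset {ι : Type*} {P : Finset α} (p : ℝ) (A : Finset ι)
    (T : ι → Finset α) (hT : ∀ i ∈ A, T i ⊆ P) :
    ∑ t ∈ P.powerset, binomialWeight P p t * #{i ∈ A | T i ⊆ t} = ∑ i ∈ A, p ^ #(T i) := by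
  simp_rw [card_filter, Nat.cast_sum, mul_sum]
  rw [sum_comm]
  refine sum_congr rfl fun i hi => ?_
  rw [← sum_binomialWeight_filter_superset (hT i hi) p, sum_filter]
  simp

lemma exists_le_of_le_sum_binomialWeight_mul {P : Finset α} {p : ℝ} (hp0 : 0 < p) (hp1 : p < 1)
    {μ : ℝ} (X : Finset α → ℝ) (hμ : μ ≤ ∑ t ∈ P.powerset, binomialWeight P p t * X t) :
    ∃ t ⊆ P, μ ≤ X t := by
  have hsum : ∑ t ∈ P.powerset, binomialWeight P p t * μ ≤
      ∑ t ∈ P.powerset, binomialWeight P p t * X t := by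
    rwa [← sum_mul, sum_binomialWeight, one_mul]
  obtain ⟨t, ht, hμt⟩ := exists_le_of_sum_le (powerset_nonempty P) hsum
  exact ⟨t, mem_powerset.1 ht, le_of_mul_le_mul_left hμt (binomialWeight_pos hp0 hp1 t)⟩

end BinomialWeight

lemma exists_dense_of_le_degeneracy {V : Type} [DecidableEq V] {E : Finset (Finset V)} {r d : ℕ}
    (hE : ∀ e ∈ E, #e = r) (hd : 0 < d) (hdE : d ≤ degeneracy E) :
    ∃ U : Finset V, U.Nonempty ∧ #U * d ≤ r * #{e ∈ E | e ⊆ U} := by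
  have hnot : ¬ degenLE E (d - 1) := fun h => by
    have := Nat.sInf_le (s := {d | degenLE E d}) h
    unfold degeneracy at hdE
    omega
  simp only [degenLE, not_forall, not_exists, not_and, not_le] at hnot
  obtain ⟨U, hU, hdeg⟩ := hnot
  refine ⟨U, hU, ?_⟩
  calc #U * d ≤ ∑ e ∈ E with e ⊆ U, #(U ∩ e) := by
        refine le_sum_card_inter fun v hv => ?_
        rw [filter_filter]
        simp_rw [and_comm (a := _ ⊆ U)]
        have := hdeg v hv
        omega
    _ = r * #{e ∈ E | e ⊆ U} := by
        rw [sum_congr rfl fun e he => by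
          rw [inter_eq_right.2 (mem_filter.1 he).2, hE e (mem_filter.1 he).1], sum_const,
          smul_eq_mul, mul_comm]

lemma card_edges_le_turanNumber {k n : ℕ} {V : Type} [DecidableEq V] {H : HyperGraph k V}
    {G : HyperGraph k (Fin n)} (hG : ¬ G.ContainsCopy H) : #G.edges ≤ turanNumber k n H :=
  le_csSup ⟨_, fun _ ⟨G', hG', _⟩ => hG' ▸ card_le_univ G'.edges⟩ ⟨G, rfl, hG⟩

namespace HyperGraph

variable {k : ℕ} {V : Type} [DecidableEq V]

lemma card_of_mem_skeleton {H : HyperGraph k V} {i : ℕ} {e : Finset V} (he : e ∈ H.skeleton i) :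
    #e = i + 1 := by
  obtain ⟨_, _, he⟩ := mem_biUnion.1 he
  exact (mem_powersetCard.1 he).2

lemma exists_dense_pattern_of_le_d1 (H : HyperGraph k V) {d : ℕ} (hd : 0 < d) (hdH : d ≤ H.d1) :
    ∃ (U : Finset V) (F : Finset (Finset U)), F.Nonempty ∧
      (∀ q ∈ F, q.map (Function.Embedding.subtype _) ∈ H.skeleton 1) ∧ #U * d ≤ 2 * #F := by
  obtain ⟨U, hU, hdense⟩ :=
    exists_dense_of_le_degeneracy (fun _ => card_of_mem_skeleton) hd hdH
  have hmap : ∀ e ∈ {e ∈ H.skeleton 1 | e ⊆ U},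
      (e.subtype (· ∈ U)).map (Function.Embedding.subtype _) = e :=
    fun e he => subtype_map_of_mem (mem_filter.1 he).2
  have hcard : #({e ∈ H.skeleton 1 | e ⊆ U}.image fun e => e.subtype (· ∈ U)) =
      #{e ∈ H.skeleton 1 | e ⊆ U} :=
    card_image_of_injOn fun e₁ h₁ e₂ h₂ h => by
      rw [← hmap e₁ h₁, ← hmap e₂ h₂]; exact congrArg _ h
  refine ⟨U, _, ?_, ?_, hcard ▸ hdense⟩
  · rw [← card_pos, hcard]
    have : 0 < #U * d := Nat.mul_pos (card_pos.2 hU) hd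
    omega
  · simp only [mem_image, forall_exists_index, and_imp]
    rintro _ e he rfl
    rw [hmap e he]
    exact (mem_filter.1 he).1

variable {α : Type} [Fintype α] [DecidableEq α]

def cliqueHypergraph (k : ℕ) (t : Finset (Finset α)) : HyperGraph k α where
  edges := {e ∈ univ.powersetCard k | e.powersetCard 2 ⊆ t}
  card_eq _ he := (mem_powersetCard.1 (mem_filter.1 he).1).2

lemma sum_binomialWeight_mul_card_cliqueHypergraph (k : ℕ) (p : ℝ) :
    ∑ t ∈ (univ.powersetCard 2 : Finset (Finset α)).powerset,
        binomialWeight (univ.powersetCard 2) p t * #(cliqueHypergraph k t).edges =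
      (Fintype.card α).choose k * p ^ k.choose 2 := by
  have hpairs : ∀ e ∈ (univ : Finset α).powersetCard k,
      e.powersetCard 2 ⊆ univ.powersetCard 2 :=
    fun _ _ => powersetCard_mono (subset_univ _)
  simp only [cliqueHypergraph]
  rw [sum_binomialWeight_mul_card_filter_subset p _ _ hpairs]
  have hK : ∀ e ∈ (univ : Finset α).powersetCard k, p ^ #(e.powersetCard 2) = p ^ k.choose 2 :=
    fun e he => by rw [card_powersetCard, (mem_powersetCard.1 he).2]
  rw [sum_congr rfl hK, sum_const, card_powersetCard, card_univ, nsmul_eq_mul]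

lemma card_cliqueHypergraph_le_sdiff (hk : 2 ≤ k) (t D : Finset (Finset α))
    (hD : ∀ q ∈ D, #q = 2) :
    #(cliqueHypergraph k t).edges ≤
      #(cliqueHypergraph k (t \ D)).edges + #D * (Fintype.card α - 2).choose (k - 2) := by
  have hcover : (cliqueHypergraph k t).edges ⊆ (cliqueHypergraph k (t \ D)).edges ∪
      D.biUnion fun q => {e ∈ univ.powersetCard k | q ⊆ e} := by
    intro e he
    simp only [cliqueHypergraph, mem_filter] at he
    by_cases hsub : e.powersetCard 2 ⊆ t \ D
    · exact mem_union_left _ (mem_filter.2 ⟨he.1, hsub⟩)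
    · obtain ⟨q, hqe, hq⟩ := not_subset.1 hsub
      have hqD : q ∈ D := by
        by_contra hqD
        exact hq (mem_sdiff.2 ⟨he.2 hqe, hqD⟩)
      exact mem_union_right _
        (mem_biUnion.2 ⟨q, hqD, mem_filter.2 ⟨he.1, (mem_powersetCard.1 hqe).1⟩⟩)
  have hthrough : ∀ q ∈ D,
      #{e ∈ (univ : Finset α).powersetCard k | q ⊆ e} = (Fintype.card α - 2).choose (k - 2) := by
    intro q hq
    rw [card_filter_powersetCard_subset q univ k (subset_univ q) (by rw [hD q hq]; exact hk),
      card_univ, hD q hq]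
  calc #(cliqueHypergraph k t).edges
      ≤ #((cliqueHypergraph k (t \ D)).edges ∪
          D.biUnion fun q => {e ∈ univ.powersetCard k | q ⊆ e}) := card_le_card hcover
    _ ≤ #(cliqueHypergraph k (t \ D)).edges +
          ∑ q ∈ D, #{e ∈ (univ : Finset α).powersetCard k | q ⊆ e} :=
        (card_union_le _ _).trans (Nat.add_le_add_left card_biUnion_le _)
    _ = #(cliqueHypergraph k (t \ D)).edges + #D * (Fintype.card α - 2).choose (k - 2) := by
        rw [sum_congr rfl hthrough, sum_const, smul_eq_mul]

section Pattern

variable {W : Type} [Fintype W] [DecidableEq W]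

noncomputable def patternCopies (F : Finset (Finset W)) (t : Finset (Finset α)) :
    Finset (W ↪ α) :=
  {g | ∀ q ∈ F, q.map g ∈ t}

lemma sum_binomialWeight_mul_card_patternCopies {F : Finset (Finset W)} (hF : ∀ q ∈ F, #q = 2)
    (p : ℝ) :
    ∑ t ∈ (univ.powersetCard 2 : Finset (Finset α)).powerset,
        binomialWeight (univ.powersetCard 2) p t * #(patternCopies F t) =
      Fintype.card (W ↪ α) * p ^ #F := by
  have hpairs : ∀ g ∈ (univ : Finset (W ↪ α)), F.image (map g) ⊆ univ.powersetCard 2 := by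
    intro g _
    simp only [image_subset_iff, mem_powersetCard, card_map]
    exact fun q hq => ⟨subset_univ _, hF q hq⟩
  have hcopies : ∀ t : Finset (Finset α),
      patternCopies F t = ({g | F.image (map g) ⊆ t} : Finset (W ↪ α)) := fun t => by
    simp only [patternCopies, image_subset_iff]
  simp only [hcopies]
  rw [sum_binomialWeight_mul_card_filter_subset p _ _ hpairs]
  have hm : ∀ g ∈ (univ : Finset (W ↪ α)), p ^ #(F.image (map g)) = p ^ #F :=
    fun g _ => by rw [card_image_of_injective _ (map_injective g)]
  rw [sum_congr rfl hm, sum_const, card_univ, nsmul_eq_mul]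

lemma exists_patternCopies_eq_empty {F : Finset (Finset W)} (hF : F.Nonempty)
    (hF2 : ∀ q ∈ F, #q = 2) (hk : 2 ≤ k) (t : Finset (Finset α)) :
    ∃ t' : Finset (Finset α), patternCopies F t' = ∅ ∧
      #(cliqueHypergraph k t).edges ≤ #(cliqueHypergraph k t').edges +
        #(patternCopies F t) * (Fintype.card α - 2).choose (k - 2) := by
  obtain ⟨q₀, hq₀⟩ := hF
  set D : Finset (Finset α) := (patternCopies F t).image fun g => q₀.map g
  refine ⟨t \ D, eq_empty_of_forall_notMem fun g hg => ?_, ?_⟩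
  · have hg' : ∀ q ∈ F, q.map g ∈ t \ D := by simpa [patternCopies] using hg
    have hgt : g ∈ patternCopies F t := by
      simpa [patternCopies] using fun q hq => (mem_sdiff.1 (hg' q hq)).1
    exact (mem_sdiff.1 (hg' q₀ hq₀)).2 (mem_image_of_mem _ hgt)
  · have hD : ∀ q ∈ D, #q = 2 := by
      simp only [D, mem_image, forall_exists_index, and_imp]
      rintro _ g _ rfl
      rw [card_map, hF2 q₀ hq₀]
    calc #(cliqueHypergraph k t).edges
        ≤ #(cliqueHypergraph k (t \ D)).edges + #D * (Fintype.card α - 2).choose (k - 2) :=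
          card_cliqueHypergraph_le_sdiff hk t D hD
      _ ≤ _ := by gcongr; exact card_image_le

theorem exists_patternCopies_eq_empty_and_le_card_cliqueHypergraph {F : Finset (Finset W)}
    (hF : F.Nonempty) (hF2 : ∀ q ∈ F, #q = 2) (hk : 2 ≤ k) {p : ℝ} (hp0 : 0 < p)
    (hp1 : p < 1) :
    ∃ t : Finset (Finset α), patternCopies F t = ∅ ∧
      (Fintype.card α).choose k * p ^ k.choose 2 -
          (Fintype.card α - 2).choose (k - 2) * Fintype.card (W ↪ α) * p ^ #F ≤
        #(cliqueHypergraph k t).edges := by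
  have hmean : (Fintype.card α).choose k * p ^ k.choose 2 -
      (Fintype.card α - 2).choose (k - 2) * Fintype.card (W ↪ α) * p ^ #F =
      ∑ t ∈ (univ.powersetCard 2 : Finset (Finset α)).powerset,
        binomialWeight (univ.powersetCard 2) p t *
        ((#(cliqueHypergraph k t).edges : ℝ) -
          (Fintype.card α - 2).choose (k - 2) * #(patternCopies F t)) := by
    simp only [mul_sub, sum_sub_distrib, mul_left_comm (binomialWeight _ p _), ← mul_sum,
      sum_binomialWeight_mul_card_cliqueHypergraph, sum_binomialWeight_mul_card_patternCopies hF2]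
    ring
  obtain ⟨t, -, ht⟩ := exists_le_of_le_sum_binomialWeight_mul hp0 hp1 _ hmean.le
  obtain ⟨t', ht', hcard⟩ := exists_patternCopies_eq_empty hF hF2 hk t
  refine ⟨t', ht', ht.trans ?_⟩
  have hcardR := (Nat.cast_le (α := ℝ)).2 hcard
  push_cast at hcardR
  linarith

lemma patternCopies_nonempty_of_containsCopy {H : HyperGraph k V} {F : Finset (Finset W)}
    (ι : W ↪ V) (hι : ∀ q ∈ F, q.map ι ∈ H.skeleton 1) {t : Finset (Finset α)}
    (hH : (cliqueHypergraph k t).ContainsCopy H) : (patternCopies F t).Nonempty := by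
  obtain ⟨f, hf, hfH⟩ := hH
  refine ⟨ι.trans ⟨f, hf⟩, mem_filter.2 ⟨mem_univ _, fun q hq => ?_⟩⟩
  obtain ⟨e, he, hqe⟩ := mem_biUnion.1 (hι q hq)
  rw [mem_powersetCard] at hqe
  refine (mem_filter.1 (hfH e he)).2 (mem_powersetCard.2 ⟨?_, ?_⟩)
  · rw [← map_map, map_eq_image]
    exact image_subset_image hqe.1
  · rw [card_map, ← card_map ι, hqe.2]

end Pattern

end HyperGraph

lemma pow_div_le_choose {n k : ℕ} (hn : 2 * k ≤ n) :
    (n : ℝ) ^ k / (2 ^ k * k !) ≤ n.choose k := by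
  have hhalf : (n : ℝ) / 2 ≤ ((n + 1 - k : ℕ) : ℝ) := by
    rw [Nat.cast_sub (by omega)]
    push_cast
    have : (2 * k : ℝ) ≤ n := by exact_mod_cast hn
    linarith
  calc (n : ℝ) ^ k / (2 ^ k * k !) = ((n : ℝ) / 2) ^ k / k ! := by rw [div_pow, div_div]
    _ ≤ ((n + 1 - k : ℕ) : ℝ) ^ k / k ! := by gcongr
    _ ≤ n.choose k := Nat.pow_le_choose k n

section Exponents

variable {n : ℝ}

lemma pow_mul_rpow_pow_le_one (hn : 1 ≤ n) {u m d : ℕ} (hd : 0 < d) (hum : u * d ≤ 2 * m) :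
    n ^ u * (n ^ (-2 / d : ℝ)) ^ m ≤ 1 := by
  have hdR : (0 : ℝ) < d := by exact_mod_cast hd
  have humR : (u : ℝ) * d ≤ 2 * m := by exact_mod_cast hum
  rw [← Real.rpow_natCast, ← Real.rpow_natCast, ← Real.rpow_mul (by linarith),
    ← Real.rpow_add (by linarith)]
  refine Real.rpow_le_one_of_one_le_of_nonpos hn ?_
  rw [neg_div, neg_mul, ← sub_eq_add_neg, sub_nonpos, div_mul_eq_mul_div, le_div_iff₀ hdR]
  exact humR

lemma rpow_sub_mul_div_eq_pow_mul (hn : 0 < n) (k d : ℕ) :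
    n ^ ((k : ℝ) - k * (k - 1) / d) = n ^ k * (n ^ (-2 / d : ℝ)) ^ k.choose 2 := by
  rw [← Real.rpow_natCast _ k, ← Real.rpow_natCast _ (k.choose 2), ← Real.rpow_mul hn.le,
    ← Real.rpow_add hn, Nat.cast_choose_two]
  ring_nf

lemma mul_pow_le_rpow_sub_mul_div {k d : ℕ} (hk : 2 ≤ k) (hkd : k.choose 2 < d) {c : ℝ}
    (hc : 0 ≤ c) (hn : 1 ≤ n) (hcn : c ^ d ≤ n) :
    c * n ^ (k - 2) ≤ n ^ ((k : ℝ) - k * (k - 1) / d) := by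
  have hdR : (0 : ℝ) < d := by exact_mod_cast (show 0 < d by omega)
  have hc : c ≤ n ^ (d⁻¹ : ℝ) := by
    calc c = (c ^ d) ^ (d⁻¹ : ℝ) := (Real.pow_rpow_inv_natCast hc (by omega)).symm
      _ ≤ n ^ (d⁻¹ : ℝ) := by gcongr
  have hexp : (d⁻¹ : ℝ) + (k - 2 : ℕ) ≤ (k : ℝ) - k * (k - 1) / d := by
    have hkd' : (k : ℝ) * (k - 1) / 2 + 1 ≤ d := by
      rw [← Nat.cast_choose_two]; exact_mod_cast hkd
    have hsum : (1 + k * (k - 1)) / d ≤ (2 : ℝ) := by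
      rw [div_le_iff₀ hdR]; linarith
    rw [add_div, one_div] at hsum
    rw [Nat.cast_sub hk]
    push_cast
    linarith
  calc c * n ^ (k - 2) ≤ n ^ (d⁻¹ : ℝ) * n ^ ((k - 2 : ℕ) : ℝ) := by
        rw [Real.rpow_natCast]; gcongr
    _ ≤ n ^ ((k : ℝ) - k * (k - 1) / d) := by
        rw [← Real.rpow_add (by linarith)]; exact Real.rpow_le_rpow_of_exponent_le hn hexp

end Exponents

lemma inv_mul_rpow_le_choose_mul_sub {k d u m n : ℕ} (hk : 2 ≤ k) (hkd : k.choose 2 < d)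
    (hum : u * d ≤ 2 * m) (hn : 2 * k + (2 ^ (k + 1) * k !) ^ d ≤ n) :
    (2 ^ (k + 1) * k ! : ℝ)⁻¹ * (n : ℝ) ^ ((k : ℝ) - k * (k - 1) / d) ≤
      n.choose k * ((n : ℝ) ^ (-2 / d : ℝ)) ^ k.choose 2 -
        (n - 2).choose (k - 2) * ((n : ℝ) ^ u * ((n : ℝ) ^ (-2 / d : ℝ)) ^ m) := by
  set c : ℝ := 2 ^ (k + 1) * (k ! : ℝ)
  set E : ℝ := (k : ℝ) - k * (k - 1) / d
  have hn1 : (1 : ℝ) ≤ n := by exact_mod_cast (show 1 ≤ n by omega)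
  have hcliques : (n : ℝ) ^ E / (2 ^ k * k !) ≤
      n.choose k * ((n : ℝ) ^ (-2 / d : ℝ)) ^ k.choose 2 := by
    rw [rpow_sub_mul_div_eq_pow_mul (by linarith), mul_div_right_comm]
    gcongr
    exact pow_div_le_choose (by omega)
  have hgap : c * (n : ℝ) ^ (k - 2) ≤ (n : ℝ) ^ E :=
    mul_pow_le_rpow_sub_mul_div hk hkd (by positivity) hn1 (by simp only [c]; exact_mod_cast
      (show (2 ^ (k + 1) * k !) ^ d ≤ n by omega))
  have hthrough : ((n - 2).choose (k - 2) : ℝ) ≤ (n : ℝ) ^ (k - 2) := by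
    exact_mod_cast (Nat.choose_le_pow _ _).trans (Nat.pow_le_pow_left (Nat.sub_le n 2) _)
  have hcopies := pow_mul_rpow_pow_le_one hn1 (show 0 < d by omega) hum
  calc c⁻¹ * (n : ℝ) ^ E = (n : ℝ) ^ E / (2 ^ k * k !) - c⁻¹ * (n : ℝ) ^ E := by
        simp only [c]; ring
    _ ≤ n.choose k * ((n : ℝ) ^ (-2 / d : ℝ)) ^ k.choose 2 - (n : ℝ) ^ (k - 2) := by
        have : (n : ℝ) ^ (k - 2) ≤ c⁻¹ * (n : ℝ) ^ E := by
          rw [le_inv_mul_iff₀ (by positivity)]; exact hgap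
        linarith
    _ ≤ _ := by
        gcongr
        calc ((n - 2).choose (k - 2) : ℝ) * ((n : ℝ) ^ u * ((n : ℝ) ^ (-2 / d : ℝ)) ^ m)
            ≤ (n : ℝ) ^ (k - 2) * 1 := by gcongr
          _ = (n : ℝ) ^ (k - 2) := mul_one _

/-- **Theorem (Turán lower bound via skeletal degeneracy).** For every `k ≥ 2` there is a
constant `a_k > 0` such that for every `d > k(k−1)/2`, every `k`-uniform hypergraph `H`
with `d₁(H) ≥ d` satisfies `ex(n,H) ≥ a_k · n^(k − k(k−1)/d)` for all sufficiently
large `n`. -/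
theorem turan_lower_bound_skeletal (k : ℕ) (hk : 2 ≤ k) :
    ∃ a > (0 : ℝ),
      ∀ d : ℕ, k * (k - 1) / 2 < d →
      ∀ (V : Type) [Fintype V] [DecidableEq V] (H : HyperGraph k V),
        d ≤ H.d1 →
        ∃ n0 : ℕ, ∀ n : ℕ, n0 ≤ n →
          a * (n : ℝ) ^ ((k : ℝ) - (k : ℝ) * ((k : ℝ) - 1) / (d : ℝ)) ≤
            (turanNumber k n H : ℝ) := by
  refine ⟨(2 ^ (k + 1) * k ! : ℝ)⁻¹, by positivity, fun d hd V _ _ H hdH => ?_⟩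
  rw [← Nat.choose_two_right] at hd
  have hd0 : (0 : ℝ) < d := by exact_mod_cast (show 0 < d by omega)
  obtain ⟨U, F, hF, hFH, hdense⟩ := H.exists_dense_pattern_of_le_d1 (by omega) hdH
  refine ⟨2 * k + (2 ^ (k + 1) * k !) ^ d, fun n hn => ?_⟩
  have hn1 : (1 : ℝ) < n := by exact_mod_cast (show 1 < n by omega)
  obtain ⟨t, ht, hcliques⟩ := HyperGraph.exists_patternCopies_eq_empty_and_le_card_cliqueHypergraph
    (α := Fin n) hF (fun q hq => by simpa using HyperGraph.card_of_mem_skeleton (hFH q hq)) hk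
    (p := (n : ℝ) ^ (-2 / d : ℝ)) (by positivity)
    (Real.rpow_lt_one_of_one_lt_of_neg hn1 (div_neg_of_neg_of_pos (by norm_num) hd0))
  have hembeddings : (Fintype.card (U ↪ Fin n) : ℝ) ≤ (n : ℝ) ^ #U := by
    rw [Fintype.card_embedding_eq, Fintype.card_fin, Fintype.card_coe]
    exact_mod_cast Nat.descFactorial_le_pow n #U
  have hfree : ¬ (HyperGraph.cliqueHypergraph k t).ContainsCopy H := fun h =>
    (HyperGraph.patternCopies_nonempty_of_containsCopy _ hFH h).ne_empty ht
  calc _ ≤ _ := inv_mul_rpow_le_choose_mul_sub hk hd hdense hn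
    _ ≤ _ := by
      simp only [Fintype.card_fin] at hcliques
      refine le_trans ?_ hcliques
      rw [mul_assoc _ (Fintype.card _ : ℝ)]
      gcongr
    _ ≤ _ := by exact_mod_cast card_edges_le_turanNumber hfree
end
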